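/- arXiv:2504.16496 — 4 statements merged into one kernel-verified Lean document; each statement's English description precedes it below -/
import Mathlib

section
/- Let Ω ⊆ ℂ be open, Λ a topological space, λ₀ ∈ Λ, and F : Λ × Ω → ℂ a continuous map such that z ↦ F(λ, z) is holomorphic on Ω for every λ ∈ Λ; put f₀ := F(λ₀, ·), and let X ⊆ Ω be a hyperbolic set for f₀. Let N be an open neighborhood of λ₀ and h₁, h₂ : N × X → Ω two continuous maps such that for i = 1, 2: h_i(λ₀, x) = x for all x ∈ X, x ↦ h_i(λ, x) is injective on X for each λ ∈ N, and F(λ, h_i(λ, x)) = h_i(λ, f₀(x)) for all (λ, x) ∈ N × X. Then there exists a neighborhood 𝒱 ⊆ N of λ₀ such that h₁ = h₂ on 𝒱 × X. -/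
open Filter Metric Set Topology

noncomputable section

def IsHypSet (f : ℂ → ℂ) (Ω X : Set ℂ) : Prop :=
  IsCompact X ∧ X ⊆ Ω ∧ Set.MapsTo f X X ∧
    ∃ c : ℝ, 0 < c ∧ ∃ μ : ℝ, 1 < μ ∧
      ∀ x ∈ X, ∀ k : ℕ, 1 ≤ k → c * μ ^ k ≤ ‖deriv (f^[k]) x‖

def IsConjMotion {Λ : Type*} [TopologicalSpace Λ] (F : Λ → ℂ → ℂ) (lam₀ : Λ)
    (Ω X : Set ℂ) (N : Set Λ) (h : Λ → ℂ → ℂ) : Prop :=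
  ContinuousOn (fun p : Λ × ℂ => h p.1 p.2) (N ×ˢ X) ∧
  (∀ x ∈ X, h lam₀ x = x) ∧
  (∀ lam ∈ N, Set.InjOn (h lam) X) ∧
  (∀ lam ∈ N, ∀ x ∈ X, h lam x ∈ Ω) ∧
  (∀ lam ∈ N, ∀ x ∈ X, F lam (h lam x) = h lam (F lam₀ x))

/-! Some iterate `G = (F lam₀)^[k]` expands distances by a factor `4` near `X`. For `lam` near
`lam₀` the holomorphic maps `(F lam)^[k]` are uniformly close to `G` on a neighbourhood of `X`, so
by the Cauchy estimates `(F lam)^[k] - G` is `1`-Lipschitz on small discs `closedBall x r`,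
`x ∈ X`, and `(F lam)^[k]` still expands by a factor `2` there; shrinking the neighbourhood, both
motions move the points of `X` by at most `r`. If `x₀` maximises `d = ‖h₁ lam x - h₂ lam x‖` on
`X`, the conjugacy gives `2 d ≤ ‖h₁ lam (G x₀) - h₂ lam (G x₀)‖ ≤ d`, hence `d = 0`. -/
theorem IsHypSet.exists_le_norm_deriv_iterate {f : ℂ → ℂ} {Ω X : Set ℂ} (hX : IsHypSet f Ω X)
    (M : ℝ) : ∃ k, ∀ x ∈ X, M ≤ ‖deriv f^[k] x‖ := by
  obtain ⟨-, -, -, c, hc, μ, hμ, hexp⟩ := hX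
  obtain ⟨n, hn⟩ := pow_unbounded_of_one_lt (M / c) hμ
  refine ⟨n + 1, fun x hx => ?_⟩
  calc M ≤ c * μ ^ n := by rw [div_lt_iff₀ hc] at hn; linarith
    _ ≤ c * μ ^ (n + 1) := by gcongr; exacts [hμ.le, n.le_succ]
    _ ≤ ‖deriv f^[n + 1] x‖ := hexp x hx (n + 1) le_add_self

theorem Set.MapsTo.iterate_semiconj_apply {α β : Type*} {X : Set α} {g : α → α} {P : β → β}
    {u : α → β} (hg : MapsTo g X X) (hu : ∀ x ∈ X, P (u x) = u (g x)) (n : ℕ) :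
    ∀ x ∈ X, P^[n] (u x) = u (g^[n] x) := by
  induction n with
  | zero => simp
  | succ n ih =>
    intro x hx
    rw [Function.iterate_succ_apply', ih x hx, hu _ (hg.iterate n hx),
      Function.iterate_succ_apply']

theorem differentiableAt_iterate_of_forall_lt {𝕜 E : Type*} [NontriviallyNormedField 𝕜]
    [NormedAddCommGroup E] [NormedSpace 𝕜 E] {g : E → E} {z : E} {n : ℕ}
    (hg : ∀ i < n, DifferentiableAt 𝕜 g (g^[i] z)) : DifferentiableAt 𝕜 g^[n] z := by
  induction n with
  | zero => exact differentiableAt_id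
  | succ n ih =>
    rw [Function.iterate_succ']
    exact (hg n n.lt_succ_self).comp z (ih fun i hi => hg i (hi.trans n.lt_succ_self))

theorem isOpen_and_continuousOn_iterate {Λ α : Type*} [TopologicalSpace Λ] [TopologicalSpace α]
    {F : Λ → α → α} {Ω : Set α} (hΩ : IsOpen Ω)
    (hF : ContinuousOn (fun p : Λ × α => F p.1 p.2) (univ ×ˢ Ω)) (n : ℕ) :
    IsOpen {p : Λ × α | ∀ i < n, (F p.1)^[i] p.2 ∈ Ω} ∧
      ContinuousOn (fun p : Λ × α => (F p.1)^[n] p.2) {p | ∀ i < n, (F p.1)^[i] p.2 ∈ Ω} := by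
  induction n with
  | zero => simpa using continuous_snd
  | succ n ih =>
    obtain ⟨hDo, hΦc⟩ := ih
    have hD : {p : Λ × α | ∀ i < n + 1, (F p.1)^[i] p.2 ∈ Ω} =
        {p | ∀ i < n, (F p.1)^[i] p.2 ∈ Ω} ∩ (fun p => (F p.1)^[n] p.2) ⁻¹' Ω := by
      ext p
      exact ⟨fun h => ⟨fun i hi => h i (by omega), h n n.lt_succ_self⟩,
        fun h i hi => (Nat.lt_succ_iff_lt_or_eq.mp hi).elim (h.1 i) (· ▸ h.2)⟩
    rw [hD]
    refine ⟨hΦc.isOpen_inter_preimage hDo hΩ, ?_⟩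
    simp only [Function.iterate_succ_apply']
    exact hF.comp (continuous_fst.continuousOn.prodMk (hΦc.mono inter_subset_left))
      fun p hp => ⟨trivial, hp.2⟩

theorem Convex.sub_mul_norm_sub_le_norm_image_sub {𝕜 E : Type*} [RCLike 𝕜] [NormedAddCommGroup E]
    [NormedSpace 𝕜 E] {f : 𝕜 → E} {s : Set 𝕜} (hs : Convex ℝ s)
    (hf : ∀ w ∈ s, DifferentiableAt 𝕜 f w) {L : E} {ε : ℝ} (hL : ∀ w ∈ s, ‖deriv f w - L‖ ≤ ε)
    {a b : 𝕜} (ha : a ∈ s) (hb : b ∈ s) : (‖L‖ - ε) * ‖a - b‖ ≤ ‖f a - f b‖ := by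
  set u : 𝕜 → E := fun z => f z - z • L
  have hu : ∀ w ∈ s, HasDerivAt u (deriv f w - L) w := fun w hw => by
    simpa using (hf w hw).hasDerivAt.fun_sub ((hasDerivAt_id w).smul_const L)
  have hlip : ‖u a - u b‖ ≤ ε * ‖a - b‖ :=
    hs.norm_image_sub_le_of_norm_deriv_le (fun w hw => (hu w hw).differentiableAt)
      (fun w hw => (hu w hw).deriv ▸ hL w hw) hb ha
  have hsplit : (a - b) • L = (f a - f b) - (u a - u b) := by simp only [u, sub_smul]; abel
  calc (‖L‖ - ε) * ‖a - b‖ = ‖(a - b) • L‖ - ε * ‖a - b‖ := by rw [norm_smul]; ring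
    _ ≤ ‖f a - f b‖ := by rw [hsplit]; linarith [norm_sub_le (f a - f b) (u a - u b)]

theorem norm_image_sub_le_of_forall_norm_le {E : Type*} [NormedAddCommGroup E] [NormedSpace ℂ E]
    {v : ℂ → E} {x : ℂ} {r M : ℝ} (hr : 0 < r) (hv : DifferentiableOn ℂ v (closedBall x (2 * r)))
    (hM : ∀ z ∈ closedBall x (2 * r), ‖v z‖ ≤ M) {a b : ℂ} (ha : a ∈ closedBall x r)
    (hb : b ∈ closedBall x r) : ‖v a - v b‖ ≤ M / r * ‖a - b‖ := by
  have hball : ∀ w ∈ closedBall x r, closedBall w r ⊆ closedBall x (2 * r) := fun w hw =>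
    closedBall_subset_closedBall' (by rw [mem_closedBall] at hw; linarith)
  have hdiff : ∀ w ∈ closedBall x r, DifferentiableAt ℂ v w := fun w hw =>
    hv.differentiableAt (closedBall_mem_nhds_of_mem
      (mem_ball.mpr ((mem_closedBall.mp hw).trans_lt (by linarith))))
  refine (convex_closedBall x r).norm_image_sub_le_of_norm_deriv_le hdiff (fun w hw => ?_) hb ha
  exact Complex.norm_deriv_le_of_forall_mem_sphere_norm_le hr
    ((hv.mono (hball w hw)).diffContOnCl_ball subset_rfl)
    fun z hz => hM z (hball w hw (sphere_subset_closedBall hz))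

theorem IsCompact.exists_pos_mul_norm_sub_le {G : ℂ → ℂ} {U X : Set ℂ} (hU : IsOpen U)
    (hX : IsCompact X) (hXU : X ⊆ U) (hG : DifferentiableOn ℂ G U) {m : ℝ}
    (hm : ∀ x ∈ X, m + 1 ≤ ‖deriv G x‖) :
    ∃ r > 0, ∀ x ∈ X, ∀ a ∈ closedBall x r, ∀ b ∈ closedBall x r,
      m * ‖a - b‖ ≤ ‖G a - G b‖ := by
  have hG' : ∀ x ∈ X, ContinuousAt (deriv G) x := fun x hx =>
    (hG.analyticOnNhd hU).deriv.continuousOn.continuousAt (hU.mem_nhds (hXU hx))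
  obtain ⟨δ₁, hδ₁, hδ₁U⟩ := hX.exists_thickening_subset_open hU hXU
  obtain ⟨δ₂, hδ₂, hδ₂G'⟩ := mem_uniformity_dist.mp
    (hX.uniformContinuousAt_of_continuousAt _ hG' (dist_mem_uniformity one_pos))
  refine ⟨min δ₁ δ₂ / 2, by positivity, fun x hx a ha b hb => ?_⟩
  have hnear : ∀ w ∈ closedBall x (min δ₁ δ₂ / 2), dist x w < δ₁ ∧ dist x w < δ₂ := by
    intro w hw
    rw [mem_closedBall, dist_comm] at hw
    constructor <;> linarith [min_le_left δ₁ δ₂, min_le_right δ₁ δ₂]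
  have hdiff : ∀ w ∈ closedBall x (min δ₁ δ₂ / 2), DifferentiableAt ℂ G w := fun w hw =>
    hG.differentiableAt (hU.mem_nhds (hδ₁U (mem_thickening_iff.mpr
      ⟨x, hx, by rw [dist_comm]; exact (hnear w hw).1⟩)))
  have hderiv : ∀ w ∈ closedBall x (min δ₁ δ₂ / 2), ‖deriv G w - deriv G x‖ ≤ 1 := by
    intro w hw
    rw [← dist_eq_norm, dist_comm]
    exact (hδ₂G' (hnear w hw).2 hx : dist (deriv G x) (deriv G w) < 1).le
  have hexp := (convex_closedBall x _).sub_mul_norm_sub_le_norm_image_sub hdiff hderiv ha hb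
  nlinarith [hm x hx, norm_nonneg (a - b)]

theorem eventually_forall_mul_norm_sub_le {Λ : Type*} [TopologicalSpace Λ] {P : Λ → ℂ → ℂ}
    {D : Set (Λ × ℂ)} (hD : IsOpen D) (hPc : ContinuousOn (fun p : Λ × ℂ => P p.1 p.2) D)
    (hPd : ∀ p ∈ D, DifferentiableAt ℂ (P p.1) p.2) {X : Set ℂ} (hX : IsCompact X) {lam₀ : Λ}
    (hXD : ∀ x ∈ X, (lam₀, x) ∈ D) {m : ℝ} (hm : ∀ x ∈ X, m + 2 ≤ ‖deriv (P lam₀) x‖) :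
    ∃ r > 0, ∀ᶠ lam in 𝓝 lam₀, ∀ x ∈ X, ∀ a ∈ closedBall x r, ∀ b ∈ closedBall x r,
      m * ‖a - b‖ ≤ ‖P lam a - P lam b‖ := by
  set U : Set ℂ := {z | (lam₀, z) ∈ D}
  have hU : IsOpen U := hD.preimage (Continuous.prodMk_right lam₀)
  obtain ⟨r₁, hr₁, hexp⟩ := hX.exists_pos_mul_norm_sub_le hU hXD
    (fun z hz => (hPd _ hz).differentiableWithinAt) (m := m + 1)
    (fun x hx => by linarith [hm x hx])
  obtain ⟨r₀, hr₀, hr₀U⟩ := hX.exists_cthickening_subset_open hU hXD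
  set r := min r₁ (r₀ / 2)
  have hr : 0 < r := by positivity
  set K := cthickening (2 * r) X
  have hKU : K ⊆ U :=
    (cthickening_mono (by linarith [min_le_right r₁ (r₀ / 2)]) X).trans hr₀U
  have hKD : ∀ᶠ lam in 𝓝 lam₀, ∀ z ∈ K, (lam, z) ∈ D :=
    hX.cthickening.eventually_forall_of_forall_eventually fun z hz => hD.mem_nhds (hKU hz)
  obtain ⟨W, hW, hWr⟩ := hX.cthickening.mem_uniformity_of_prod (f := P) (q := lam₀)
    (s := {lam | ∀ z ∈ K, (lam, z) ∈ D}) (hPc.mono fun p hp => hp.1 p.2 hp.2) hKD.self_of_nhds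
    (dist_mem_uniformity hr)
  rw [nhdsWithin_eq_nhds.mpr hKD] at hW
  refine ⟨r, hr, ?_⟩
  filter_upwards [hKD, hW] with lam hlamD hlamW x hx a ha b hb
  have hball : closedBall x (2 * r) ⊆ K := closedBall_subset_cthickening hx _
  have hpert := norm_image_sub_le_of_forall_norm_le (v := fun z => P lam z - P lam₀ z) hr
    (fun z hz => ((hPd (lam, z) (hlamD z (hball hz))).sub
      (hPd (lam₀, z) (hKU (hball hz)))).differentiableWithinAt)
    (fun z hz => by rw [← dist_eq_norm]; exact (hWr lam hlamW z (hball hz)).le) ha hb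
  rw [div_self hr.ne', one_mul] at hpert
  have hunpert := hexp x hx a (closedBall_subset_closedBall (min_le_left _ _) ha)
    b (closedBall_subset_closedBall (min_le_left _ _) hb)
  have hsplit : P lam₀ a - P lam₀ b =
      (P lam a - P lam b) - ((P lam a - P lam₀ a) - (P lam b - P lam₀ b)) := by ring
  rw [hsplit] at hunpert
  linarith [norm_sub_le (P lam a - P lam b) ((P lam a - P lam₀ a) - (P lam b - P lam₀ b))]

theorem IsConjMotion.eventually_forall_dist_lt {Λ : Type*} [TopologicalSpace Λ]
    {F : Λ → ℂ → ℂ} {lam₀ : Λ} {Ω X : Set ℂ} {N : Set Λ} {h : Λ → ℂ → ℂ}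
    (hm : IsConjMotion F lam₀ Ω X N h) (hX : IsCompact X) (hN : N ∈ 𝓝 lam₀) {ε : ℝ}
    (hε : 0 < ε) : ∀ᶠ lam in 𝓝 lam₀, ∀ x ∈ X, dist (h lam x) x < ε := by
  obtain ⟨W, hW, hWε⟩ := hX.mem_uniformity_of_prod hm.1 (mem_of_mem_nhds hN)
    (dist_mem_uniformity hε)
  rw [nhdsWithin_eq_nhds.mpr hN] at hW
  filter_upwards [hW] with lam hlam x hx
  simpa [hm.2.1 x hx] using hWε lam hlam x hx

theorem eqOn_of_semiconj_of_expanding {E : Type*} [MetricSpace E] {X : Set E}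
    (hX : IsCompact X) {g P u₁ u₂ : E → E} (hg : MapsTo g X X) (hu₁ : ContinuousOn u₁ X)
    (hu₂ : ContinuousOn u₂ X) (hconj₁ : ∀ x ∈ X, P (u₁ x) = u₁ (g x))
    (hconj₂ : ∀ x ∈ X, P (u₂ x) = u₂ (g x)) {c r : ℝ} (hc : 1 < c)
    (hP : ∀ x ∈ X, ∀ a ∈ closedBall x r, ∀ b ∈ closedBall x r, c * dist a b ≤ dist (P a) (P b))
    (hu₁r : ∀ x ∈ X, u₁ x ∈ closedBall x r) (hu₂r : ∀ x ∈ X, u₂ x ∈ closedBall x r) :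
    EqOn u₁ u₂ X := by
  intro x hx
  obtain ⟨x₀, hx₀, hmax⟩ :=
    hX.exists_isMaxOn ⟨x, hx⟩ (continuous_dist.comp_continuousOn (hu₁.prodMk hu₂))
  rw [isMaxOn_iff] at hmax
  have hgap : c * dist (u₁ x₀) (u₂ x₀) ≤ dist (u₁ x₀) (u₂ x₀) := by
    calc c * dist (u₁ x₀) (u₂ x₀) ≤ dist (P (u₁ x₀)) (P (u₂ x₀)) :=
          hP x₀ hx₀ _ (hu₁r x₀ hx₀) _ (hu₂r x₀ hx₀)
      _ = dist (u₁ (g x₀)) (u₂ (g x₀)) := by rw [hconj₁ x₀ hx₀, hconj₂ x₀ hx₀]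
      _ ≤ dist (u₁ x₀) (u₂ x₀) := hmax _ (hg hx₀)
  have hzero : dist (u₁ x₀) (u₂ x₀) ≤ 0 := by nlinarith [dist_nonneg (x := u₁ x₀) (y := u₂ x₀)]
  exact dist_le_zero.mp ((hmax x hx).trans hzero)

/-- Local uniqueness of continuous conjugating motions of a hyperbolic set:
two such motions over an open neighborhood `N` of `lam₀` agree on a smaller neighborhood
`𝒱 ⊆ N` of `lam₀`. -/
theorem local_uniqueness_of_continuous_motions
    {Λ : Type*} [TopologicalSpace Λ]
    (Ω : Set ℂ) (hΩ : IsOpen Ω) (lam₀ : Λ) (F : Λ → ℂ → ℂ)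
    (hFc : ContinuousOn (fun p : Λ × ℂ => F p.1 p.2) (Set.univ ×ˢ Ω))
    (hFh : ∀ lam : Λ, DifferentiableOn ℂ (F lam) Ω)
    (X : Set ℂ) (hX : IsHypSet (F lam₀) Ω X)
    (N : Set Λ) (hNo : IsOpen N) (hN₀ : lam₀ ∈ N)
    (h₁ h₂ : Λ → ℂ → ℂ)
    (hm₁ : IsConjMotion F lam₀ Ω X N h₁) (hm₂ : IsConjMotion F lam₀ Ω X N h₂) :
    ∃ V : Set Λ, IsOpen V ∧ lam₀ ∈ V ∧ V ⊆ N ∧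
      ∀ lam ∈ V, ∀ x ∈ X, h₁ lam x = h₂ lam x := by
  obtain ⟨k, hk⟩ := hX.exists_le_norm_deriv_iterate (2 + 2)
  obtain ⟨hXc, hXΩ, hXf, -⟩ := hX
  obtain ⟨hDo, hΦc⟩ := isOpen_and_continuousOn_iterate hΩ hFc k
  obtain ⟨r, hr, hexp⟩ := eventually_forall_mul_norm_sub_le (P := fun lam => (F lam)^[k]) hDo hΦc
    (fun p hp => differentiableAt_iterate_of_forall_lt fun i hi =>
      (hFh p.1).differentiableAt (hΩ.mem_nhds (hp i hi)))
    hXc (fun x hx i _ => hXΩ (hXf.iterate i hx)) hk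
  have hN : ∀ᶠ lam in 𝓝 lam₀, lam ∈ N := hNo.mem_nhds hN₀
  obtain ⟨V, hV, hVo, hV₀⟩ := eventually_nhds_iff.mp <| hexp.and <| hN.and <|
    (hm₁.eventually_forall_dist_lt hXc hN hr).and (hm₂.eventually_forall_dist_lt hXc hN hr)
  refine ⟨V, hVo, hV₀, fun lam hlam => (hV lam hlam).2.1, fun lam hlam => ?_⟩
  obtain ⟨hlamexp, hlamN, hclose₁, hclose₂⟩ := hV lam hlam
  have hslice : ∀ h, IsConjMotion F lam₀ Ω X N h → ContinuousOn (h lam) X := fun h hm =>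
    hm.1.comp (Continuous.prodMk_right lam).continuousOn fun _ hz => ⟨hlamN, hz⟩
  exact eqOn_of_semiconj_of_expanding hXc (hXf.iterate k) (hslice h₁ hm₁) (hslice h₂ hm₂)
    (hXf.iterate_semiconj_apply (hm₁.2.2.2.2 lam hlamN) k)
    (hXf.iterate_semiconj_apply (hm₂.2.2.2.2 lam hlamN) k) one_lt_two
    (fun x hx a ha b hb => by simpa [dist_eq_norm] using hlamexp x hx a ha b hb)
    (fun x hx => (hclose₁ x hx).le) (fun x hx => (hclose₂ x hx).le)
end
end

section
/- Let e ≥ 0 be an integer and suppose that for each n ∈ ℕ we are given points a_{n,1}, …, a_{n,e} ∈ 𝔻 such that, for each k, a_{n,k} → α_k ∈ closure(𝔻) as n → ∞. Set S := {α_k : |α_k| = 1} ⊆ ∂𝔻 and assume 1 ∉ S. Let B_n be the fixed-point-centered Blaschke product with free zeros a_{n,1}, …, a_{n,e}, and let B⁰ be the fixed-point-centered Blaschke product whose free zeros are those α_k with |α_k| < 1. Then, viewed as rational self-maps of the Riemann sphere ℂ̂, the maps B_n converge to B⁰ uniformly on every compact subset of ℂ̂ ∖ S. -/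
open Filter Metric Set Topology

noncomputable section

/-- The fixed-point-centered Blaschke product with free zeros `a k`, `k ∈ s`, as a map
`ℂ → ℂ`: `B(z) = λ · z · ∏_{k ∈ s} (z - a k)/(1 - conj (a k) z)` where
`λ = ∏_{k ∈ s} (1 - conj (a k))/(1 - a k)` is the unique unimodular constant with `B 1 = 1`. -/
def blaschkeFun {e : ℕ} (s : Finset (Fin e)) (a : Fin e → ℂ) (z : ℂ) : ℂ :=
  (∏ k ∈ s, (1 - (starRingEnd ℂ) (a k)) / (1 - a k)) * z *
    ∏ k ∈ s, (z - a k) / (1 - (starRingEnd ℂ) (a k) * z)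

/-- The denominator of the Blaschke product, vanishing exactly at its poles. -/
def blaschkeDen {e : ℕ} (s : Finset (Fin e)) (a : Fin e → ℂ) (z : ℂ) : ℂ :=
  ∏ k ∈ s, (1 - (starRingEnd ℂ) (a k) * z)

/-- The Blaschke product viewed as a rational self-map of the Riemann sphere
`ℂ̂ = OnePoint ℂ` (it fixes `∞` since it fixes `0` and has degree `≥` its denominator's). -/
def blaschkeSphere {e : ℕ} (s : Finset (Fin e)) (a : Fin e → ℂ) (w : OnePoint ℂ) :
    OnePoint ℂ :=
  Option.elim (show Option ℂ from w) OnePoint.infty fun z =>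
    if blaschkeDen s a z = 0 then OnePoint.infty else OnePoint.some (blaschkeFun s a z)

/-- The standard stereographic embedding of the Riemann sphere `OnePoint ℂ` onto the unit
sphere in `ℝ³`. -/
def sphereEmbed (w : OnePoint ℂ) : ℝ × ℝ × ℝ :=
  Option.elim (show Option ℂ from w) ((0 : ℝ), (0 : ℝ), (1 : ℝ)) fun z =>
    (2 * z.re / (1 + ‖z‖ ^ 2), 2 * z.im / (1 + ‖z‖ ^ 2),
      (‖z‖ ^ 2 - 1) / (‖z‖ ^ 2 + 1))

/-- A (chordal-type) distance on the Riemann sphere inducing its compact Hausdorff topology,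
hence its unique compatible uniform structure. -/
def sphDist (u v : OnePoint ℂ) : ℝ := dist (sphereEmbed u) (sphereEmbed v)

/-!
For `|α| = 1`, `α ≠ 1`, the normalized factor `(1 - ᾱ)/(1 - α) · (z - α)/(1 - ᾱ z)` is
identically `1` on `ℂ ∖ {α}`, so off `S` the limit `B⁰` coincides with the Blaschke product `B_α`
whose free zeros are all the `α k`. It therefore suffices that `(b, w) ↦ B_b(w) ∈ ℂ̂` is jointly
continuous at `(α, w)` for every `w ∉ S`: continuity along the compact fibre `{α} × K` gives
uniform convergence on `K`. At finite `w` write `B_b = N_b / D_b`; at a pole of `B_α` the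
numerator does not vanish, because the pole lies outside the closed disc. At `w = ∞`,
`|1 - b̄ z| ≤ 9 |z - b|` for `|b| ≤ 2`, `|z| ≥ 3`, so `|B_b(z)| ≥ |z| / 9 ^ e` for `b` near `α`.
-/

open scoped OnePoint

lemma conj_mul_self_of_norm_eq_one {α : ℂ} (h : ‖α‖ = 1) : (starRingEnd ℂ) α * α = 1 := by
  rw [Complex.conj_mul', h]; norm_num

lemma one_sub_conj_mul_ne_zero {α z : ℂ} (h : ‖α‖ = 1) (hz : z ≠ α) :
    1 - (starRingEnd ℂ) α * z ≠ 0 := by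
  intro hc
  refine hz (mul_left_cancel₀ (a := (starRingEnd ℂ) α) ?_ ?_)
  · rw [← norm_ne_zero_iff, Complex.norm_conj, h]; exact one_ne_zero
  · rw [conj_mul_self_of_norm_eq_one h]; linear_combination -hc

lemma one_sub_conj_ne_zero {w : ℂ} (hw : w ≠ 1) : 1 - (starRingEnd ℂ) w ≠ 0 := by
  rw [show 1 - (starRingEnd ℂ) w = (starRingEnd ℂ) (1 - w) by simp, map_ne_zero]
  exact sub_ne_zero.2 hw.symm

lemma norm_one_sub_conj_div_one_sub {w : ℂ} (hw : w ≠ 1) :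
    ‖(1 - (starRingEnd ℂ) w) / (1 - w)‖ = 1 := by
  rw [norm_div, show 1 - (starRingEnd ℂ) w = (starRingEnd ℂ) (1 - w) by simp, Complex.norm_conj,
    div_self (norm_ne_zero_iff.2 (sub_ne_zero.2 hw.symm))]

lemma norm_one_sub_conj_mul_le {b z : ℂ} (hb : ‖b‖ ≤ 2) (hz : 3 ≤ ‖z‖) :
    ‖1 - (starRingEnd ℂ) b * z‖ ≤ 9 * ‖z - b‖ :=
  calc ‖1 - (starRingEnd ℂ) b * z‖ ≤ 1 + ‖b‖ * ‖z‖ := by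
        simpa [Complex.norm_conj] using norm_sub_le (1 : ℂ) ((starRingEnd ℂ) b * z)
    _ ≤ 9 * (‖z‖ - ‖b‖) := by nlinarith
    _ ≤ 9 * ‖z - b‖ := by gcongr; exact norm_sub_norm_le z b

lemma normalized_blaschke_factor_eq_one {α z : ℂ} (h : ‖α‖ = 1) (h1 : α ≠ 1) (hz : z ≠ α) :
    (1 - (starRingEnd ℂ) α) / (1 - α) * ((z - α) / (1 - (starRingEnd ℂ) α * z)) = 1 := by
  have hα : (1 : ℂ) - α ≠ 0 := sub_ne_zero.2 h1.symm
  have hd := one_sub_conj_mul_ne_zero h hz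
  field_simp
  linear_combination (1 - z) * conj_mul_self_of_norm_eq_one h

lemma dist_sphereEmbed_coe_infty_le {z : ℂ} (hz : z ≠ 0) :
    dist (sphereEmbed z) (sphereEmbed ∞) ≤ 2 / ‖z‖ := by
  have hr : 0 < ‖z‖ := norm_pos_iff.2 hz
  have horizontal : ∀ x : ℝ, |x| ≤ ‖z‖ → dist (2 * x / (1 + ‖z‖ ^ 2)) 0 ≤ 2 / ‖z‖ := by
    intro x hx
    rw [Real.dist_eq, sub_zero, abs_div, abs_mul, abs_two,
      abs_of_pos (by positivity : (0 : ℝ) < 1 + ‖z‖ ^ 2), div_le_div_iff₀ (by positivity) hr]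
    nlinarith [abs_nonneg x]
  have vertical : dist ((‖z‖ ^ 2 - 1) / (‖z‖ ^ 2 + 1)) 1 ≤ 2 / ‖z‖ := by
    rw [Real.dist_eq, show (‖z‖ ^ 2 - 1) / (‖z‖ ^ 2 + 1) - 1 = -(2 / (‖z‖ ^ 2 + 1)) by
      field_simp; ring, abs_neg, abs_of_pos (by positivity), div_le_div_iff₀ (by positivity) hr]
    nlinarith [sq_nonneg (‖z‖ - 1)]
  exact max_le (horizontal _ (Complex.abs_re_le_norm z))
    (max_le (horizontal _ (Complex.abs_im_le_norm z)) vertical)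

lemma continuous_sphereEmbed : Continuous sphereEmbed := by
  rw [OnePoint.continuous_iff, coclosedCompact_eq_cocompact]
  refine ⟨?_, ?_⟩
  · rw [tendsto_iff_dist_tendsto_zero]
    refine squeeze_zero' (Eventually.of_forall fun _ => dist_nonneg) ?_
      ((tendsto_const_nhds (x := (2 : ℝ))).div_atTop (tendsto_norm_cocompact_atTop (E := ℂ)))
    filter_upwards [tendsto_norm_cocompact_atTop.eventually_gt_atTop 0] with z hz
    exact dist_sphereEmbed_coe_infty_le (norm_pos_iff.1 hz)
  · change Continuous fun z : ℂ => (2 * z.re / (1 + ‖z‖ ^ 2), 2 * z.im / (1 + ‖z‖ ^ 2),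
      (‖z‖ ^ 2 - 1) / (‖z‖ ^ 2 + 1))
    fun_prop (disch := intro; positivity)

theorem OnePoint.tendsto_nhds_infty_iff_norm {E ι : Type*} [SeminormedAddCommGroup E]
    [ProperSpace E] {l : Filter ι} {g : ι → OnePoint E} :
    Tendsto g l (𝓝 ∞) ↔ ∀ M : ℝ, ∀ᶠ i in l, ∀ v : E, g i = ↑v → M ≤ ‖v‖ := by
  rw [Tendsto, OnePoint.le_nhds_infty]
  constructor
  · intro h M
    filter_upwards [h (closedBall 0 M) isClosed_closedBall (isCompact_closedBall 0 M)]
      with i hi v hv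
    rw [mem_preimage, hv] at hi
    rcases hi with ⟨u, hu, huv⟩ | hinf
    · rw [← OnePoint.coe_injective huv]
      exact (by simpa using hu : M < ‖u‖).le
    · exact absurd hinf (OnePoint.coe_ne_infty v)
  · intro h s _ hs
    obtain ⟨R, hR⟩ := hs.isBounded.subset_closedBall 0
    rw [mem_map]
    filter_upwards [h (R + 1)] with i hi
    rw [mem_preimage]
    rcases hgi : g i with _ | v
    · exact Or.inr rfl
    · refine Or.inl ⟨v, fun hv => ?_, rfl⟩
      have := mem_closedBall_zero_iff.1 (hR hv)
      linarith [hi v hgi]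

def sphereDiv (n d : ℂ) : OnePoint ℂ :=
  if d = 0 then ∞ else ↑(n / d)

lemma sphereDiv_eq_coe_iff {n d v : ℂ} : sphereDiv n d = ↑v ↔ d ≠ 0 ∧ n / d = v := by
  unfold sphereDiv
  split_ifs with hd
  · simp [hd, eq_comm (a := ∞)]
  · simp [hd]

theorem continuousAt_sphereDiv {n d : ℂ} (h : n ≠ 0 ∨ d ≠ 0) :
    ContinuousAt (fun p : ℂ × ℂ => sphereDiv p.1 p.2) (n, d) := by
  by_cases hd : d = 0
  · have hn : n ≠ 0 := h.resolve_right (not_not.2 hd)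
    rw [ContinuousAt, sphereDiv, if_pos hd, OnePoint.tendsto_nhds_infty_iff_norm]
    intro M
    have hev : ∀ᶠ p : ℂ × ℂ in 𝓝 (n, d), max M 1 * ‖p.2‖ < ‖p.1‖ :=
      ContinuousAt.eventually_lt (by fun_prop) (by fun_prop) (by simpa [hd] using hn)
    filter_upwards [hev] with p hp v hv
    obtain ⟨hp2, rfl⟩ := sphereDiv_eq_coe_iff.1 hv
    rw [norm_div, le_div_iff₀ (norm_pos_iff.2 hp2)]
    nlinarith [le_max_left M 1, norm_nonneg p.2]
  · rw [ContinuousAt, sphereDiv, if_neg hd]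
    refine (OnePoint.continuous_coe.continuousAt.comp
      (continuousAt_fst.div continuousAt_snd hd)).congr' ?_
    filter_upwards [continuousAt_snd.eventually_ne hd] with p hp
    simp [sphereDiv, hp]

theorem tendstoUniformlyOn_of_continuousAt_uncurry {P X β ι : Type*} [TopologicalSpace P]
    [TopologicalSpace X] [UniformSpace β] {f : P → X → β} {q : P} {K : Set X}
    (hK : IsCompact K) (hf : ∀ x ∈ K, ContinuousAt (Function.uncurry f) (q, x))
    {l : Filter ι} {a : ι → P} (ha : Tendsto a l (𝓝 q)) :
    TendstoUniformlyOn (fun i => f (a i)) (f q) l K := by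
  rw [← tendstoLocallyUniformlyOn_iff_tendstoUniformlyOn_of_compact hK,
    tendstoLocallyUniformlyOn_iff_forall_tendsto]
  intro x hx
  have hlim : Tendsto (fun y : ι × X => (f q y.2, f (a y.1) y.2)) (l ×ˢ 𝓝 x)
      (𝓝 (f q x, f q x)) :=
    ((hf x hx).tendsto.comp (tendsto_const_nhds.prodMk_nhds tendsto_snd)).prodMk_nhds
      ((hf x hx).tendsto.comp ((ha.comp tendsto_fst).prodMk_nhds tendsto_snd))
  exact (hlim.mono_right (nhds_le_uniformity _)).mono_left
    (Filter.prod_mono le_rfl nhdsWithin_le_nhds)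

section Blaschke

variable {e : ℕ}

def blaschkeNum (s : Finset (Fin e)) (a : Fin e → ℂ) (z : ℂ) : ℂ :=
  (∏ k ∈ s, (1 - (starRingEnd ℂ) (a k)) / (1 - a k)) * z * ∏ k ∈ s, (z - a k)

variable {s : Finset (Fin e)} {a : Fin e → ℂ}

lemma blaschkeFun_eq_mul_prod {z : ℂ} :
    blaschkeFun s a z =
      z * ∏ k ∈ s, (1 - (starRingEnd ℂ) (a k)) / (1 - a k) *
        ((z - a k) / (1 - (starRingEnd ℂ) (a k) * z)) := by
  rw [blaschkeFun, Finset.prod_mul_distrib]; ring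

lemma blaschkeSphere_coe {z : ℂ} :
    blaschkeSphere s a z =
      if blaschkeDen s a z = 0 then ∞ else ↑(blaschkeFun s a z) :=
  rfl

lemma blaschkeSphere_coe_eq_sphereDiv {z : ℂ} :
    blaschkeSphere s a z = sphereDiv (blaschkeNum s a z) (blaschkeDen s a z) := by
  rw [blaschkeSphere_coe, sphereDiv, blaschkeFun, blaschkeNum, blaschkeDen,
    Finset.prod_div_distrib (f := fun k => z - a k), mul_div_assoc]

lemma blaschkeFun_filter_norm_lt_one (hle : ∀ k ∈ s, ‖a k‖ ≤ 1)
    (h1 : ∀ k ∈ s, ‖a k‖ = 1 → a k ≠ 1) {z : ℂ} (hz : ∀ k ∈ s, ‖a k‖ = 1 → z ≠ a k) :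
    blaschkeFun (s.filter fun k => ‖a k‖ < 1) a z = blaschkeFun s a z := by
  rw [blaschkeFun_eq_mul_prod, blaschkeFun_eq_mul_prod, Finset.prod_filter_of_ne]
  intro k hk hne
  by_contra hlt
  have habs : ‖a k‖ = 1 := le_antisymm (hle k hk) (not_lt.1 hlt)
  exact hne (normalized_blaschke_factor_eq_one habs (h1 k hk habs) (hz k hk habs))

lemma blaschkeDen_filter_norm_lt_one_eq_zero_iff (hle : ∀ k ∈ s, ‖a k‖ ≤ 1) {z : ℂ}
    (hz : ∀ k ∈ s, ‖a k‖ = 1 → z ≠ a k) :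
    blaschkeDen (s.filter fun k => ‖a k‖ < 1) a z = 0 ↔ blaschkeDen s a z = 0 := by
  rw [blaschkeDen, blaschkeDen,
    ← Finset.prod_filter_mul_prod_filter_not s (fun k => ‖a k‖ < 1), mul_eq_zero, or_iff_left]
  refine Finset.prod_ne_zero_iff.2 fun k hk => ?_
  rw [Finset.mem_filter, not_lt] at hk
  have habs : ‖a k‖ = 1 := le_antisymm (hle k hk.1) hk.2
  exact one_sub_conj_mul_ne_zero habs (hz k hk.1 habs)

lemma blaschkeSphere_filter_norm_lt_one (hle : ∀ k ∈ s, ‖a k‖ ≤ 1)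
    (h1 : ∀ k ∈ s, ‖a k‖ = 1 → a k ≠ 1) {w : OnePoint ℂ}
    (hw : ∀ k ∈ s, ‖a k‖ = 1 → w ≠ ↑(a k)) :
    blaschkeSphere (s.filter fun k => ‖a k‖ < 1) a w = blaschkeSphere s a w := by
  induction w using OnePoint.rec with
  | infty => rfl
  | coe z =>
    have hz : ∀ k ∈ s, ‖a k‖ = 1 → z ≠ a k := fun k hk habs h => hw k hk habs (by rw [h])
    simp only [blaschkeSphere_coe, blaschkeDen_filter_norm_lt_one_eq_zero_iff hle hz,
      blaschkeFun_filter_norm_lt_one hle h1 hz]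

lemma norm_mul_blaschkeDen_le {b : Fin e → ℂ} (hb : ∀ k, ‖b k‖ ≤ 2) (hb1 : ∀ k, b k ≠ 1)
    {z : ℂ} (hz : 3 ≤ ‖z‖) :
    ‖z‖ * ‖blaschkeDen Finset.univ b z‖ ≤ 9 ^ e * ‖blaschkeNum Finset.univ b z‖ := by
  have hnum : ‖blaschkeNum Finset.univ b z‖ = ‖z‖ * ∏ k, ‖z - b k‖ := by
    simp only [blaschkeNum, norm_mul, norm_prod, norm_one_sub_conj_div_one_sub (hb1 _),
      Finset.prod_const_one, one_mul]
  have hden : ‖blaschkeDen Finset.univ b z‖ ≤ 9 ^ e * ∏ k, ‖z - b k‖ :=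
    calc ‖blaschkeDen Finset.univ b z‖ = ∏ k, ‖1 - (starRingEnd ℂ) (b k) * z‖ :=
          norm_prod _ _
      _ ≤ ∏ k, 9 * ‖z - b k‖ := Finset.prod_le_prod (fun _ _ => norm_nonneg _)
          fun k _ => norm_one_sub_conj_mul_le (hb k) hz
      _ = 9 ^ e * ∏ k, ‖z - b k‖ := by
          rw [Finset.prod_mul_distrib, Finset.prod_const, Finset.card_univ, Fintype.card_fin]
  rw [hnum]
  calc ‖z‖ * ‖blaschkeDen Finset.univ b z‖ ≤ ‖z‖ * (9 ^ e * ∏ k, ‖z - b k‖) := by gcongr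
    _ = 9 ^ e * (‖z‖ * ∏ k, ‖z - b k‖) := by ring

lemma tendsto_blaschkeSphere_infty {α : Fin e → ℂ} (hα : ∀ k, ‖α k‖ < 2)
    (h1 : ∀ k, α k ≠ 1) :
    Tendsto (fun p : (Fin e → ℂ) × OnePoint ℂ => blaschkeSphere Finset.univ p.1 p.2)
      (𝓝 (α, ∞)) (𝓝 ∞) := by
  rw [OnePoint.tendsto_nhds_infty_iff_norm]
  intro M
  have hb : ∀ᶠ b in 𝓝 α, ∀ k, ‖b k‖ < 2 ∧ b k ≠ 1 := eventually_all.2 fun k =>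
    (continuous_apply k).continuousAt.eventually
      (((isOpen_lt continuous_norm continuous_const).inter isOpen_ne).mem_nhds ⟨hα k, h1 k⟩)
  have hw := OnePoint.tendsto_nhds_infty_iff_norm.1 (tendsto_id (x := 𝓝 (∞ : OnePoint ℂ)))
    (max 3 (9 ^ e * M))
  filter_upwards [hb.prodMk_nhds hw] with ⟨b, w⟩ ⟨hb, hw⟩ v hv
  induction w using OnePoint.rec with
  | infty => exact absurd hv (OnePoint.infty_ne_coe v)
  | coe z =>
    have hz := hw z rfl
    rw [blaschkeSphere_coe_eq_sphereDiv] at hv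
    obtain ⟨hd, rfl⟩ := sphereDiv_eq_coe_iff.1 hv
    have key := norm_mul_blaschkeDen_le (fun k => (hb k).1.le) (fun k => (hb k).2)
      (le_of_max_le_left hz)
    rw [norm_div, le_div_iff₀ (norm_pos_iff.2 hd)]
    refine le_of_mul_le_mul_left ?_ (by positivity : (0 : ℝ) < 9 ^ e)
    calc 9 ^ e * (M * ‖blaschkeDen Finset.univ b z‖)
        = 9 ^ e * M * ‖blaschkeDen Finset.univ b z‖ := by ring
      _ ≤ ‖z‖ * ‖blaschkeDen Finset.univ b z‖ := by gcongr; exact le_of_max_le_right hz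
      _ ≤ _ := key

lemma continuousAt_blaschkeNum {α : Fin e → ℂ} {z : ℂ} (h1 : ∀ k, α k ≠ 1) :
    ContinuousAt (fun p : (Fin e → ℂ) × ℂ => blaschkeNum Finset.univ p.1 p.2) (α, z) := by
  have hfactor : ContinuousAt
      (fun p : (Fin e → ℂ) × ℂ => ∏ k, (1 - (starRingEnd ℂ) (p.1 k)) / (1 - p.1 k)) (α, z) :=
    tendsto_finsetProd _ fun k _ =>
      ((continuous_const.sub (Complex.continuous_conj.comp
        ((continuous_apply k).comp continuous_fst))).continuousAt).div
        (continuous_const.sub ((continuous_apply k).comp continuous_fst)).continuousAt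
        (sub_ne_zero.2 (h1 k).symm)
  have hprod : Continuous fun p : (Fin e → ℂ) × ℂ => ∏ k, (p.2 - p.1 k) := by fun_prop
  exact (hfactor.mul continuousAt_snd).mul hprod.continuousAt

lemma continuous_blaschkeDen :
    Continuous (fun p : (Fin e → ℂ) × ℂ => blaschkeDen Finset.univ p.1 p.2) := by
  unfold blaschkeDen
  fun_prop

lemma continuousAt_blaschkeSphere_coe {α : Fin e → ℂ} {z : ℂ} (h1 : ∀ k, α k ≠ 1)
    (hne : blaschkeNum Finset.univ α z ≠ 0 ∨ blaschkeDen Finset.univ α z ≠ 0) :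
    ContinuousAt (fun p : (Fin e → ℂ) × OnePoint ℂ => blaschkeSphere Finset.univ p.1 p.2)
      (α, ↑z) := by
  have hemb :
      IsOpenEmbedding (Prod.map id (↑) : (Fin e → ℂ) × ℂ → (Fin e → ℂ) × OnePoint ℂ) :=
    IsOpenEmbedding.id.prodMap OnePoint.isOpenEmbedding_coe
  refine (hemb.continuousAt_iff (x := (α, z))).1 ?_
  have hcomp : (fun p : (Fin e → ℂ) × OnePoint ℂ => blaschkeSphere Finset.univ p.1 p.2) ∘
      Prod.map id (↑) = fun p : (Fin e → ℂ) × ℂ =>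
        sphereDiv (blaschkeNum Finset.univ p.1 p.2) (blaschkeDen Finset.univ p.1 p.2) :=
    funext fun _ => blaschkeSphere_coe_eq_sphereDiv
  have hnd : ContinuousAt (fun p : (Fin e → ℂ) × ℂ =>
      (blaschkeNum Finset.univ p.1 p.2, blaschkeDen Finset.univ p.1 p.2)) (α, z) :=
    (continuousAt_blaschkeNum h1).prodMk continuous_blaschkeDen.continuousAt
  rw [hcomp]
  exact ContinuousAt.comp (x := (α, z)) (continuousAt_sphereDiv hne) hnd

theorem continuousAt_blaschkeSphere {α : Fin e → ℂ} (hle : ∀ k, ‖α k‖ ≤ 1)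
    (h1 : ∀ k, α k ≠ 1) {w : OnePoint ℂ} (hw : ∀ k, ‖α k‖ = 1 → w ≠ ↑(α k)) :
    ContinuousAt (fun p : (Fin e → ℂ) × OnePoint ℂ => blaschkeSphere Finset.univ p.1 p.2)
      (α, w) := by
  induction w using OnePoint.rec with
  | infty => exact tendsto_blaschkeSphere_infty (fun k => (hle k).trans_lt one_lt_two) h1
  | coe z =>
    refine continuousAt_blaschkeSphere_coe h1 (or_iff_not_imp_right.2 fun hden => ?_)
    obtain ⟨j, -, hj⟩ := Finset.prod_eq_zero_iff.1 (not_not.1 hden)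
    have hjz : ‖α j‖ * ‖z‖ = 1 := by
      rw [← Complex.norm_conj, ← norm_mul, show (starRingEnd ℂ) (α j) * z = 1 by
        linear_combination -hj, norm_one]
    have hαj : ‖α j‖ < 1 := (hle j).lt_of_ne fun h =>
      one_sub_conj_mul_ne_zero h (fun hz => hw j h (by rw [hz])) hj
    have hz : 1 < ‖z‖ := by nlinarith [norm_nonneg (α j)]
    refine mul_ne_zero (mul_ne_zero ?_ (norm_pos_iff.1 (one_pos.trans hz))) ?_
    · exact Finset.prod_ne_zero_iff.2 fun k _ =>
        div_ne_zero (one_sub_conj_ne_zero (h1 k)) (sub_ne_zero.2 (h1 k).symm)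
    · refine Finset.prod_ne_zero_iff.2 fun k _ => sub_ne_zero.2 fun hzk => ?_
      linarith [hle k, hzk ▸ hz]

end Blaschke

theorem blaschke_degenerate_convergence_general
    (e : ℕ) (a : ℕ → Fin e → ℂ) (α : Fin e → ℂ)
    (hmem : ∀ k, α k ∈ closure (Metric.ball (0 : ℂ) 1))
    (hconv : ∀ k, Tendsto (fun n => a n k) atTop (𝓝 (α k)))
    (h1 : ∀ k, ‖α k‖ = 1 → α k ≠ 1) :
    ∀ K : Set (OnePoint ℂ), IsCompact K →
      (∀ k, ‖α k‖ = 1 → OnePoint.some (α k) ∉ K) →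
      ∀ ε : ℝ, 0 < ε → ∀ᶠ n in atTop, ∀ w ∈ K,
        sphDist (blaschkeSphere Finset.univ (a n) w)
          (blaschkeSphere (Finset.univ.filter fun k => ‖α k‖ < 1) α w) < ε := by
  intro K hK hKS ε hε
  have hle : ∀ k, ‖α k‖ ≤ 1 := fun k => by
    simpa [closure_ball (0 : ℂ) one_ne_zero] using hmem k
  have hne : ∀ k, α k ≠ 1 := fun k hk => h1 k (by simp [hk]) hk
  have hS : ∀ w ∈ K, ∀ k, ‖α k‖ = 1 → w ≠ ↑(α k) := fun w hw k hk h => hKS k hk (h ▸ hw)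
  have hunif := tendstoUniformlyOn_of_continuousAt_uncurry
    (f := fun b w => sphereEmbed (blaschkeSphere Finset.univ b w)) hK
    (fun w hw => continuous_sphereEmbed.continuousAt.comp
      (continuousAt_blaschkeSphere hle hne (hS w hw))) (tendsto_pi_nhds.2 hconv)
  filter_upwards [Metric.tendstoUniformlyOn_iff.1 hunif ε hε] with n hn w hw
  rw [sphDist, blaschkeSphere_filter_norm_lt_one (fun k _ => hle k) (fun k _ => h1 k)
    (fun k _ => hS w hw k), dist_comm]
  exact hn w hw

/-- If the free zeros `a n k ∈ 𝔻` of the fixed-point-centered Blaschke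
products `B n` converge to `α k ∈ closure 𝔻` and `1 ∉ S := {α k : |α k| = 1}`, then `B n`
converges, uniformly on every compact subset of `ℂ̂ ∖ S`, to the fixed-point-centered Blaschke
product `B⁰` whose free zeros are the `α k` with `|α k| < 1`. -/
theorem blaschke_degenerate_convergence
    (e : ℕ) (a : ℕ → Fin e → ℂ) (α : Fin e → ℂ)
    (ha : ∀ n k, ‖a n k‖ < 1)
    (hmem : ∀ k, α k ∈ closure (Metric.ball (0 : ℂ) 1))
    (hconv : ∀ k, Tendsto (fun n => a n k) atTop (𝓝 (α k)))
    (h1 : ∀ k, ‖α k‖ = 1 → α k ≠ 1) :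
    ∀ K : Set (OnePoint ℂ), IsCompact K →
      (∀ k, ‖α k‖ = 1 → OnePoint.some (α k) ∉ K) →
      ∀ ε : ℝ, 0 < ε → ∀ᶠ n in atTop, ∀ w ∈ K,
        sphDist (blaschkeSphere Finset.univ (a n) w)
          (blaschkeSphere (Finset.univ.filter fun k => ‖α k‖ < 1) α w) < ε :=
  blaschke_degenerate_convergence_general e a α hmem hconv h1
end
end

section
/- Let B be a finite Blaschke product of degree d ≥ 2 with B(0) = 0, i.e. B(z) = λ z ∏_{k=1}^{d−1} (z − a_k)/(1 − conj(a_k) z) with |λ| = 1 and a_1, …, a_{d−1} ∈ 𝔻. If K ⊆ ∂𝔻 is a closed set with B(K) ⊆ K and K ≠ ∂𝔻, then K is totally disconnected. -/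
/-!
On the circle, `B` lifts to a map `h` of `ℝ` with `B (exp (θ I)) = exp (h θ I)`, whose
derivative `1 + ∑ₖ P(aₖ, exp (θ I))` is a sum of Poisson kernels and hence, by Harnack's
inequality, at least `c = 1 + ∑ₖ (1 - ‖aₖ‖) / (1 + ‖aₖ‖) > 1`. A connected subset of `K` with two
points misses a point `p` of the circle outside `K`, so it contains an arc; `h^[n]` stretches that
arc to length at least `cⁿ` times its length, so for large `n` its image under `B^[n]` wraps around
the whole circle and meets `p`, contradicting `B (K) ⊆ K`.
-/

open Filter Metric Set Topology

noncomputable section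

open Complex ComplexConjugate Function
open scoped Real

theorem pow_mul_sub_le_iterate_sub {h : ℝ → ℝ} {c : ℝ} (hc : 0 ≤ c)
    (hexpand : ∀ ⦃s t⦄, s ≤ t → c * (t - s) ≤ h t - h s) (n : ℕ) ⦃s t : ℝ⦄ (hst : s ≤ t) :
    c ^ n * (t - s) ≤ h^[n] t - h^[n] s := by
  induction n with
  | zero => simp
  | succ n ih =>
    have hmono : h^[n] s ≤ h^[n] t := by nlinarith [pow_nonneg hc n]
    rw [iterate_succ_apply', iterate_succ_apply', pow_succ', mul_assoc]
    exact (mul_le_mul_of_nonneg_left ih hc).trans (hexpand hmono)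

theorem exp_arg_mul_I_of_norm_eq_one {z : ℂ} (hz : ‖z‖ = 1) : exp (arg z * I) = z := by
  simpa [hz] using norm_mul_exp_arg_mul_I z

theorem exists_mem_Icc_exp_eq {φ : ℝ → ℝ} {s t : ℝ} (hst : s ≤ t)
    (hφ : ContinuousOn φ (Icc s t)) (hlen : φ s + 2 * π ≤ φ t) {p : ℂ} (hp : ‖p‖ = 1) :
    ∃ θ ∈ Icc s t, exp (φ θ * I) = p := by
  set ξ := toIcoMod Real.two_pi_pos (φ s) (arg p) with hξ_def
  have hξ : ξ ∈ Icc (φ s) (φ t) := by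
    have := toIcoMod_mem_Ico Real.two_pi_pos (φ s) (arg p)
    exact ⟨this.1, this.2.le.trans hlen⟩
  obtain ⟨θ, hθ, hθξ⟩ := intermediate_value_Icc hst hφ hξ
  refine ⟨θ, hθ, ?_⟩
  rw [hθξ, ← exp_arg_mul_I_of_norm_eq_one hp, exp_eq_exp_iff_exists_int]
  refine ⟨-toIcoDiv Real.two_pi_pos (φ s) (arg p), ?_⟩
  rw [hξ_def, ← self_sub_toIcoDiv_zsmul, zsmul_eq_mul]
  push_cast
  ring

theorem exists_Icc_exp_mem_of_isPreconnected {C : Set ℂ} (hC : IsPreconnected C)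
    (hCsub : C ⊆ sphere 0 1) (hCnt : C.Nontrivial) {p : ℂ} (hp : ‖p‖ = 1) (hpC : p ∉ C) :
    ∃ s t : ℝ, s < t ∧ ∀ θ ∈ Icc s t, exp (θ * I) ∈ C := by
  -- `g` is a continuous branch of the argument on the circle cut at `p`
  set g : ℂ → ℝ := fun z => arg (-p) + arg (-(z / p))
  have hnorm : ∀ z ∈ C, ‖-(z / p)‖ = 1 := fun z hz => by
    rw [norm_neg, norm_div, hp, mem_sphere_zero_iff_norm.1 (hCsub hz), div_one]
  have hp0 : p ≠ 0 := norm_ne_zero_iff.1 (hp ▸ one_ne_zero)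
  have hexp_g : ∀ z ∈ C, exp (g z * I) = z := fun z hz => by
    rw [ofReal_add, add_mul, exp_add, exp_arg_mul_I_of_norm_eq_one (by rwa [norm_neg]),
      exp_arg_mul_I_of_norm_eq_one (hnorm z hz)]
    field_simp
  have hslit : (fun z => -(z / p)) '' C ⊆ slitPlane := by
    rw [subset_slitPlane_iff_of_subset_sphere (r := 1)]
    · rintro ⟨z, hz, hzp⟩
      rw [neg_inj, ofReal_one, div_eq_one_iff_eq hp0] at hzp
      exact hpC (hzp ▸ hz)
    · rintro _ ⟨z, hz, rfl⟩
      exact mem_sphere_zero_iff_norm.2 (hnorm z hz)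
  have hg : ContinuousOn g C := continuousOn_const.add
    (continuousOn_arg.comp (by fun_prop) fun z hz => hslit (mem_image_of_mem _ hz))
  obtain ⟨x, hx, y, hy, hxy⟩ := hCnt
  have hgxy : g x ≠ g y := fun h => hxy (by rw [← hexp_g x hx, ← hexp_g y hy, h])
  have hIcc : ∀ {s t}, s ∈ g '' C → t ∈ g '' C → Icc s t ⊆ g '' C :=
    (hC.image g hg).Icc_subset
  have hmem : ∀ {s t}, s ∈ g '' C → t ∈ g '' C → ∀ θ ∈ Icc s t, exp (θ * I) ∈ C := by
    intro s t hs ht θ hθ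
    obtain ⟨z, hz, rfl⟩ := hIcc hs ht hθ
    rwa [hexp_g z hz]
  rcases hgxy.lt_or_gt with h | h
  · exact ⟨_, _, h, hmem (mem_image_of_mem g hx) (mem_image_of_mem g hy)⟩
  · exact ⟨_, _, h, hmem (mem_image_of_mem g hy) (mem_image_of_mem g hx)⟩

theorem isTotallyDisconnected_of_expanding_lift {f : ℂ → ℂ} {h : ℝ → ℝ} {c : ℝ}
    (hc : 1 < c) (hh : Continuous h) (hexpand : ∀ ⦃s t⦄, s ≤ t → c * (t - s) ≤ h t - h s)
    (hlift : Semiconj (fun θ : ℝ => exp (θ * I)) h f) {K : Set ℂ} (hKsub : K ⊆ sphere 0 1)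
    (hKinv : MapsTo f K K) (hKne : K ≠ sphere 0 1) : IsTotallyDisconnected K := by
  intro C hCK hC
  by_contra hCnt
  obtain ⟨p, hp, hpK⟩ := not_subset.1 fun h => hKne (hKsub.antisymm h)
  have hp1 : ‖p‖ = 1 := mem_sphere_zero_iff_norm.1 hp
  obtain ⟨s, t, hst, harc⟩ := exists_Icc_exp_mem_of_isPreconnected hC (hCK.trans hKsub)
    (not_subsingleton_iff.1 hCnt) hp1 fun hpC => hpK (hCK hpC)
  obtain ⟨n, hn⟩ := pow_unbounded_of_one_lt (2 * π / (t - s)) hc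
  have hcover : h^[n] s + 2 * π ≤ h^[n] t := by
    rw [div_lt_iff₀ (sub_pos.2 hst)] at hn
    linarith [pow_mul_sub_le_iterate_sub (zero_le_one.trans hc.le) hexpand n hst.le]
  obtain ⟨θ, hθ, hθp⟩ := exists_mem_Icc_exp_eq hst.le (hh.iterate n).continuousOn hcover hp1
  apply hpK
  rw [← hθp, show exp (h^[n] θ * I) = f^[n] (exp (θ * I)) from hlift.iterate_right n θ]
  exact hKinv.iterate n (hCK (harc θ hθ))

theorem eq_mul_exp_sub_of_hasDerivAt {F G g : ℝ → ℂ} (hF : ∀ t, HasDerivAt F (F t * g t) t)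
    (hG : ∀ t, HasDerivAt G (g t) t) (s t : ℝ) : F t = F s * exp (G t - G s) := by
  have hconst : ∀ u, HasDerivAt (fun u => F u * exp (-G u)) 0 u := fun u =>
    ((hF u).mul (hG u).neg.cexp).congr_deriv (by simp only [Pi.neg_apply]; ring)
  have := is_const_of_deriv_eq_zero (fun u => (hconst u).differentiableAt)
    (fun u => (hconst u).deriv) t s
  calc F t = F t * exp (-G t) * exp (G t) := by
        rw [mul_assoc, ← exp_add, neg_add_cancel, exp_zero, mul_one]
    _ = F s * exp (G t - G s) := by
        rw [this, mul_assoc, ← exp_add, neg_add_eq_sub]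

theorem HasDerivAt.finset_prod_of_logDeriv {ι 𝕜 𝔸 : Type*} [NontriviallyNormedField 𝕜]
    [NormedCommRing 𝔸] [NormedAlgebra 𝕜 𝔸] {s : Finset ι} {F : ι → 𝕜 → 𝔸} {g : ι → 𝔸} {x : 𝕜}
    (hF : ∀ i ∈ s, HasDerivAt (F i) (F i x * g i) x) :
    HasDerivAt (fun y => ∏ i ∈ s, F i y) ((∏ i ∈ s, F i x) * ∑ i ∈ s, g i) x := by
  classical
  convert HasDerivAt.fun_finsetProd hF using 1
  rw [Finset.mul_sum]
  refine Finset.sum_congr rfl fun i hi => ?_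
  rw [smul_eq_mul, ← mul_assoc, Finset.prod_erase_mul _ _ hi]

theorem hasDerivAt_exp_mul_I (θ : ℝ) :
    HasDerivAt (fun t : ℝ => exp (t * I)) (exp (θ * I) * I) θ := by
  simpa using (((hasDerivAt_id (θ : ℂ)).mul_const I).cexp).comp_ofReal

def blaschkeFactor (a z : ℂ) : ℂ := (z - a) / (1 - conj a * z)

section BlaschkeFactor

variable {a z : ℂ}

theorem one_sub_conj_mul_eq_mul_conj_sub (hz : ‖z‖ = 1) : 1 - conj a * z = z * conj (z - a) := by
  rw [map_sub, mul_sub, mul_conj, normSq_eq_norm_sq, hz]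
  push_cast
  ring

theorem norm_blaschkeFactor (ha : ‖a‖ < 1) (hz : ‖z‖ = 1) : ‖blaschkeFactor a z‖ = 1 := by
  have hza : z - a ≠ 0 := sub_ne_zero.2 (by rintro rfl; linarith)
  rw [blaschkeFactor, one_sub_conj_mul_eq_mul_conj_sub hz, norm_div, norm_mul, hz, norm_conj,
    one_mul, div_self (norm_ne_zero_iff.2 hza)]

theorem hasDerivAt_blaschkeFactor (h : 1 - conj a * z ≠ 0) :
    HasDerivAt (blaschkeFactor a) ((1 - conj a * a) / (1 - conj a * z) ^ 2) z := by
  refine (((hasDerivAt_id z).sub_const a).fun_div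
    (((hasDerivAt_id z).const_mul (conj a)).const_sub 1) h).congr_deriv ?_
  simp only [id]
  ring

theorem mul_deriv_blaschkeFactor (ha : ‖a‖ < 1) (hz : ‖z‖ = 1) :
    z * ((1 - conj a * a) / (1 - conj a * z) ^ 2) = blaschkeFactor a z * poissonKernel 0 a z := by
  have hza : z - a ≠ 0 := sub_ne_zero.2 (by rintro rfl; linarith)
  have hz0 : z ≠ 0 := norm_ne_zero_iff.1 (hz ▸ one_ne_zero)
  have hconj : conj (z - a) ≠ 0 := (map_ne_zero _).2 hza
  have hnorm : ((‖z - a‖ ^ 2 : ℝ) : ℂ) = (z - a) * conj (z - a) := by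
    rw [mul_conj, normSq_eq_norm_sq]
  have hnum : 1 - conj a * a = ((1 - ‖a‖ ^ 2 : ℝ) : ℂ) := by
    rw [mul_comm, mul_conj, normSq_eq_norm_sq]
    push_cast
    ring
  rw [blaschkeFactor, poissonKernel, sub_zero, sub_zero, hz, one_sub_conj_mul_eq_mul_conj_sub hz,
    one_pow, ofReal_div, hnorm, hnum]
  field_simp

theorem hasDerivAt_blaschkeFactor_exp (ha : ‖a‖ < 1) (θ : ℝ) :
    HasDerivAt (fun t : ℝ => blaschkeFactor a (exp (t * I)))
      (blaschkeFactor a (exp (θ * I)) * (poissonKernel 0 a (exp (θ * I)) * I)) θ := by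
  have hz : ‖exp (θ * I)‖ = 1 := norm_exp_ofReal_mul_I θ
  have hden : 1 - conj a * exp (θ * I) ≠ 0 := by
    rw [one_sub_conj_mul_eq_mul_conj_sub hz]
    exact mul_ne_zero (norm_ne_zero_iff.1 (hz ▸ one_ne_zero))
      ((map_ne_zero _).2 (sub_ne_zero.2 (by rintro rfl; linarith)))
  refine ((hasDerivAt_blaschkeFactor hden).comp θ (hasDerivAt_exp_mul_I θ)).congr_deriv ?_
  linear_combination I * mul_deriv_blaschkeFactor ha hz

end BlaschkeFactor

theorem div_le_poissonKernel {a z : ℂ} (ha : ‖a‖ < 1) (hz : ‖z‖ = 1) :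
    (1 - ‖a‖) / (1 + ‖a‖) ≤ poissonKernel 0 a z := by
  simpa [poissonKernel_eq_re_herglotzRieszKernel, herglotzRieszKernel] using
    le_re_herglotzRieszKernel (c := 0) (R := 1) (mem_sphere_zero_iff_norm.2 hz)
      (mem_ball_zero_iff.2 ha)

theorem continuous_poissonKernel_exp {a : ℂ} (ha : ‖a‖ < 1) :
    Continuous fun θ : ℝ => poissonKernel 0 a (exp (θ * I)) := by
  simp only [poissonKernel, sub_zero]
  refine Continuous.div (by fun_prop) (by fun_prop) fun θ => pow_ne_zero 2 ?_
  refine norm_ne_zero_iff.2 (sub_ne_zero.2 fun h => ?_)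
  have := norm_exp_ofReal_mul_I θ
  rw [h] at this
  linarith

section BlaschkeProduct

variable {ι : Type*} [Fintype ι]

def blaschkeProduct (lam : ℂ) (a : ι → ℂ) (z : ℂ) : ℂ := lam * z * ∏ k, blaschkeFactor (a k) z

def blaschkeLiftDeriv (a : ι → ℂ) (θ : ℝ) : ℝ := 1 + ∑ k, poissonKernel 0 (a k) (exp (θ * I))

def blaschkeLift (lam : ℂ) (a : ι → ℂ) (θ : ℝ) : ℝ :=
  arg (blaschkeProduct lam a 1) + ∫ t in 0..θ, blaschkeLiftDeriv a t

variable {lam : ℂ} {a : ι → ℂ}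

theorem norm_blaschkeProduct (hlam : ‖lam‖ = 1) (ha : ∀ k, ‖a k‖ < 1) {z : ℂ} (hz : ‖z‖ = 1) :
    ‖blaschkeProduct lam a z‖ = 1 := by
  simp [blaschkeProduct, norm_prod, hlam, hz, norm_blaschkeFactor (ha _) hz]

theorem le_blaschkeLiftDeriv (ha : ∀ k, ‖a k‖ < 1) (θ : ℝ) :
    1 + ∑ k, (1 - ‖a k‖) / (1 + ‖a k‖) ≤ blaschkeLiftDeriv a θ :=
  (add_le_add_iff_left 1).2 (Finset.sum_le_sum fun k _ =>
    div_le_poissonKernel (ha k) (norm_exp_ofReal_mul_I θ))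

theorem hasDerivAt_blaschkeLift (ha : ∀ k, ‖a k‖ < 1) (θ : ℝ) :
    HasDerivAt (blaschkeLift lam a) (blaschkeLiftDeriv a θ) θ :=
  ((continuous_const.add (continuous_finsetSum _ fun k _ => continuous_poissonKernel_exp (ha k))
    ).integral_hasStrictDerivAt 0 θ).hasDerivAt.const_add _

theorem differentiable_blaschkeLift (ha : ∀ k, ‖a k‖ < 1) :
    Differentiable ℝ (blaschkeLift lam a) :=
  fun θ => (hasDerivAt_blaschkeLift ha θ).differentiableAt

theorem mul_sub_le_blaschkeLift_sub (ha : ∀ k, ‖a k‖ < 1) {s t : ℝ} (hst : s ≤ t) :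
    (1 + ∑ k, (1 - ‖a k‖) / (1 + ‖a k‖)) * (t - s) ≤ blaschkeLift lam a t - blaschkeLift lam a s :=
  mul_sub_le_image_sub_of_le_deriv (differentiable_blaschkeLift ha)
    (fun θ => (hasDerivAt_blaschkeLift ha θ).deriv ▸ le_blaschkeLiftDeriv ha θ) hst

theorem hasDerivAt_blaschkeProduct_exp (ha : ∀ k, ‖a k‖ < 1) (θ : ℝ) :
    HasDerivAt (fun t : ℝ => blaschkeProduct lam a (exp (t * I)))
      (blaschkeProduct lam a (exp (θ * I)) * (blaschkeLiftDeriv a θ * I)) θ := by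
  refine (((hasDerivAt_exp_mul_I θ).const_mul lam).mul (HasDerivAt.finset_prod_of_logDeriv
    fun k _ => hasDerivAt_blaschkeFactor_exp (ha k) θ)).congr_deriv ?_
  simp only [blaschkeProduct, blaschkeLiftDeriv, ← Finset.sum_mul]
  push_cast
  ring

theorem blaschkeProduct_exp (hlam : ‖lam‖ = 1) (ha : ∀ k, ‖a k‖ < 1) (θ : ℝ) :
    blaschkeProduct lam a (exp (θ * I)) = exp (blaschkeLift lam a θ * I) := by
  have h0 : blaschkeProduct lam a (exp ((0 : ℝ) * I)) = exp (blaschkeLift lam a 0 * I) := by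
    simpa [blaschkeLift] using
      (exp_arg_mul_I_of_norm_eq_one (norm_blaschkeProduct hlam ha norm_one)).symm
  rw [eq_mul_exp_sub_of_hasDerivAt (hasDerivAt_blaschkeProduct_exp ha)
    (fun t => ((hasDerivAt_blaschkeLift ha t).ofReal_comp).mul_const I) 0 θ, h0,
    ← exp_add, add_sub_cancel]

end BlaschkeProduct

theorem closed_invariant_proper_subset_of_circle_totallyDisconnected_general
    (d : ℕ) (hd : 2 ≤ d) (lam : ℂ) (hlam : ‖lam‖ = 1)
    (a : Fin (d - 1) → ℂ) (ha : ∀ k, ‖a k‖ < 1)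
    (B : ℂ → ℂ)
    (hB : ∀ z, B z = lam * z * ∏ k, (z - a k) / (1 - (starRingEnd ℂ) (a k) * z))
    (K : Set ℂ) (hKsub : K ⊆ Metric.sphere (0 : ℂ) 1)
    (hKinv : Set.MapsTo B K K) (hKne : K ≠ Metric.sphere (0 : ℂ) 1) :
    IsTotallyDisconnected K := by
  obtain rfl : B = blaschkeProduct lam a := funext hB
  have hexpanding : 1 < 1 + ∑ k, (1 - ‖a k‖) / (1 + ‖a k‖) :=
    lt_add_of_pos_right 1 <| Finset.sum_pos (fun k _ => div_pos (by linarith [ha k])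
      (by positivity)) ⟨⟨0, by omega⟩, Finset.mem_univ _⟩
  exact isTotallyDisconnected_of_expanding_lift hexpanding
    (differentiable_blaschkeLift ha).continuous
    (fun _ _ => mul_sub_le_blaschkeLift_sub ha) (fun θ => (blaschkeProduct_exp hlam ha θ).symm)
    hKsub hKinv hKne

/-- Let `B` be a finite Blaschke product of degree `d ≥ 2` fixing `0`,
i.e. `B(z) = λ z ∏_{k=1}^{d-1} (z - a k)/(1 - conj (a k) z)` with `|λ| = 1` and `a k ∈ 𝔻`.
Every closed forward-invariant proper subset `K` of the unit circle is totally
disconnected. -/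
theorem closed_invariant_proper_subset_of_circle_totallyDisconnected
    (d : ℕ) (hd : 2 ≤ d) (lam : ℂ) (hlam : ‖lam‖ = 1)
    (a : Fin (d - 1) → ℂ) (ha : ∀ k, ‖a k‖ < 1)
    (B : ℂ → ℂ)
    (hB : ∀ z, B z = lam * z * ∏ k, (z - a k) / (1 - (starRingEnd ℂ) (a k) * z))
    (K : Set ℂ) (hKclosed : IsClosed K) (hKsub : K ⊆ Metric.sphere (0 : ℂ) 1)
    (hKinv : Set.MapsTo B K K) (hKne : K ≠ Metric.sphere (0 : ℂ) 1) :
    IsTotallyDisconnected K :=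
  closed_invariant_proper_subset_of_circle_totallyDisconnected_general d hd lam hlam a ha B hB K
    hKsub hKinv hKne
end
end

section
/- (Bolzano–Poincaré–Miranda theorem.) Let n ≥ 1 and let F = (f_1, …, f_n) : [0,1]^n → ℝ^n be continuous. Suppose that for every k ∈ {1, …, n}: f_k(x) ≥ 0 for all x ∈ [0,1]^n with x_k = 0, and f_k(x) ≤ 0 for all x ∈ [0,1]^n with x_k = 1. Then there exists at least one x ∈ [0,1]^n with F(x) = 0. -/
/-!
Label each point `p` of the grid `{0, …, N}^n` by the least `i` with `f_i(p / N) ≤ 0` and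
`p_i ≠ 0`, or by `n` if there is none. The boundary conditions make this labelling admissible for
Kuhn's cubical Sperner lemma, so some simplex of Kuhn's triangulation of the cube carries all the
labels `0, …, n`. At its vertex labelled `n` all `f_i` are `≥ 0`, while for each `i` some vertex
at distance `≤ 1 / N` has `f_i ≤ 0`; by uniform continuity that vertex is an approximate zero, and
compactness gives a zero.

Kuhn's lemma goes by induction on the dimension. Reflecting a simplex across a facet that carries
the labels `0, …, m - 1` pairs off such facets, except those on the boundary of the cube; by
admissibility the boundary ones are exactly the fully labelled simplices of the face `x_last = N`,
an odd number by induction. On the other hand a simplex has an odd number of such facets if and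
only if it is fully labelled.
-/

open Set

namespace Finset

variable {ι α : Type*} [DecidableEq α] {f : ι → α}

lemma injOn_of_subset_image_of_card_le {u : Finset ι} {t : Finset α}
    (hsub : t ⊆ u.image f) (hmaps : ∀ i ∈ u, f i ∈ t) (hcard : #u ≤ #t) : Set.InjOn f u := by
  have himage : u.image f = t := (image_subset_iff.2 hmaps).antisymm hsub
  exact card_image_iff.1 (card_image_le.antisymm (himage ▸ hcard))

theorem card_filter_eq_self_modEq_card [DecidableEq ι] {s : Finset ι} {g : ι → ι}
    (hg : ∀ a ∈ s, g a ∈ s) (hgg : ∀ a ∈ s, g (g a) = a) : #{a ∈ s | g a = a} ≡ #s [MOD 2] := by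
  have hmoved : (#{a ∈ s | ¬g a = a} : ZMod 2) = 0 := by
    rw [← nsmul_one, ← sum_const]
    refine sum_involution (fun a _ => g a) (fun _ _ => by decide)
      (fun a ha _ => (mem_filter.1 ha).2) (fun a ha => ?_) (fun a ha => hgg a (mem_filter.1 ha).1)
    obtain ⟨has, hga⟩ := mem_filter.1 ha
    refine mem_filter.2 ⟨hg a has, fun h => hga ?_⟩
    rw [hgg a has] at h
    exact h.symm
  calc #{a ∈ s | g a = a} = #{a ∈ s | g a = a} + 0 := rfl
    _ ≡ #{a ∈ s | g a = a} + #{a ∈ s | ¬g a = a} [MOD 2] :=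
      (Nat.modEq_zero_iff_dvd.2 ((ZMod.natCast_eq_zero_iff _ 2).1 hmoved)).symm.add_left _
    _ = #s := card_filter_add_card_filter_not _

variable [Fintype ι] [DecidableEq ι] {s : Finset α} {a : α}

lemma filter_subset_image_erase_eq_singleton (ha : a ∉ s) (hf : ∀ i, f i ∈ insert a s)
    (hcard : Fintype.card ι = #s + 1) (hsurj : insert a s ⊆ univ.image f) {j₀ : ι}
    (hj₀ : f j₀ = a) : ({j | s ⊆ (univ.erase j).image f} : Finset ι) = {j₀} := by
  have hinj : Function.Injective f := by
    rw [← Set.injOn_univ, ← coe_univ]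
    exact injOn_of_subset_image_of_card_le hsurj (fun i _ => hf i)
      (by rw [card_univ, hcard, card_insert_of_notMem ha])
  ext j
  simp only [mem_filter, mem_univ, true_and, mem_singleton]
  constructor
  · intro hj
    rcases mem_insert.1 (hf j) with hja | hjs
    · exact hinj (hja.trans hj₀.symm)
    · obtain ⟨k, hk, hkj⟩ := mem_image.1 (hj hjs)
      exact absurd (hinj hkj) (ne_of_mem_erase hk)
  · rintro rfl t ht
    obtain ⟨k, -, rfl⟩ := mem_image.1 (hsurj (mem_insert_of_mem ht))
    refine mem_image_of_mem f (mem_erase.2 ⟨?_, mem_univ k⟩)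
    rintro rfl
    exact ha (hj₀ ▸ ht)

lemma filter_subset_image_erase_eq_pair (hf : ∀ i, f i ∈ insert a s)
    (hcard : Fintype.card ι = #s + 1) (hs : s ⊆ univ.image f) (ha : a ∉ univ.image f) :
    ∃ x y, x ≠ y ∧ ({j | s ⊆ (univ.erase j).image f} : Finset ι) = {x, y} := by
  have hmaps : ∀ i ∈ (univ : Finset ι), f i ∈ s := fun i _ =>
    (mem_insert.1 (hf i)).resolve_left fun h => ha (h ▸ mem_image_of_mem f (mem_univ i))
  obtain ⟨x, -, y, -, hxy, hfxy⟩ :=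
    exists_ne_map_eq_of_card_lt_of_maps_to (by rw [card_univ, hcard]; omega) hmaps
  refine ⟨x, y, hxy, ?_⟩
  ext j
  simp only [mem_filter, mem_univ, true_and, mem_insert, mem_singleton]
  constructor
  · intro hj
    by_contra! hne
    have hinj := injOn_of_subset_image_of_card_le hj (fun i _ => hmaps i (mem_univ i))
      (by rw [card_erase_of_mem (mem_univ j), card_univ, hcard]; omega)
    exact hxy (hinj (by simpa using hne.1.symm) (by simpa using hne.2.symm) hfxy)
  · intro hj t ht
    obtain ⟨j', hj'j, hfj'⟩ : ∃ j', j' ≠ j ∧ f j' = f j := by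
      rcases hj with rfl | rfl
      exacts [⟨y, hxy.symm, hfxy.symm⟩, ⟨x, hxy, hfxy⟩]
    obtain ⟨k, -, rfl⟩ := mem_image.1 (hs ht)
    by_cases hkj : k = j
    · subst hkj
      exact hfj' ▸ mem_image_of_mem f (mem_erase.2 ⟨hj'j, mem_univ j'⟩)
    · exact mem_image_of_mem f (mem_erase.2 ⟨hkj, mem_univ k⟩)

theorem card_filter_subset_image_erase_mod_two (ha : a ∉ s) (hf : ∀ i, f i ∈ insert a s)
    (hcard : Fintype.card ι = #s + 1) :
    #({j | s ⊆ (univ.erase j).image f} : Finset ι) % 2 =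
      if insert a s ⊆ univ.image f then 1 else 0 := by
  split_ifs with hsurj
  · obtain ⟨j₀, -, hj₀⟩ := mem_image.1 (hsurj (mem_insert_self a s))
    rw [filter_subset_image_erase_eq_singleton ha hf hcard hsurj hj₀, card_singleton]
  by_cases hs : s ⊆ univ.image f
  · have ha' : a ∉ univ.image f := fun h => hsurj (insert_subset h hs)
    obtain ⟨x, y, hxy, hpair⟩ := filter_subset_image_erase_eq_pair hf hcard hs ha'
    rw [hpair, card_pair hxy]
  · rw [filter_false_of_mem fun j _ hj => hs (hj.trans (image_subset_image (erase_subset j _))),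
      card_empty]

end Finset

lemma coe_finRotate_inv_of_ne_zero {m : ℕ} (i : Fin (m + 1)) (hi : i ≠ 0) :
    ((finRotate (m + 1))⁻¹ i : ℕ) = i - 1 := by
  rw [show (finRotate (m + 1))⁻¹ i = i - 1 by
    rw [Equiv.Perm.inv_eq_iff_eq, finRotate_apply, sub_add_cancel], Fin.coe_sub_one, if_neg hi]

namespace Kuhn

open Finset

variable {m N : ℕ}

/-- A Kuhn simplex `(p, σ)` of the grid: its vertices are obtained from the base point `p` by
raising the coordinates by one, one at a time, coordinate `i` at step `σ i`. -/
abbrev Simplex (m : ℕ) := (Fin m → ℕ) × Equiv.Perm (Fin m)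

def vertex (s : Simplex m) (k : ℕ) : Fin m → ℕ :=
  fun i => s.1 i + if (s.2 i : ℕ) < k then 1 else 0

/-- The Kuhn simplices triangulating the cube `[0, N]^m`. -/
def simplices (m N : ℕ) : Finset (Simplex m) :=
  Fintype.piFinset (fun _ => range N) ×ˢ Finset.univ

def facet (z : Simplex m × Fin (m + 1)) : Finset (Fin m → ℕ) :=
  Finset.univ.image fun k => vertex z.1 (z.2.succAbove k)

def IsFull (ℓ : (Fin m → ℕ) → ℕ) (s : Simplex m) : Prop :=
  range (m + 1) ⊆ Finset.univ.image fun k : Fin (m + 1) => ℓ (vertex s k)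

def IsDoor (ℓ : (Fin m → ℕ) → ℕ) (z : Simplex m × Fin (m + 1)) : Prop :=
  range m ⊆ (facet z).image ℓ

instance (ℓ : (Fin m → ℕ) → ℕ) : DecidablePred (IsFull ℓ) :=
  fun _ => inferInstanceAs (Decidable ((_ : Finset ℕ) ⊆ _))

instance (ℓ : (Fin m → ℕ) → ℕ) : DecidablePred (IsDoor ℓ) :=
  fun _ => inferInstanceAs (Decidable ((_ : Finset ℕ) ⊆ _))

lemma mem_simplices {s : Simplex m} : s ∈ simplices m N ↔ ∀ i, s.1 i < N := by
  simp [simplices]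

lemma vertex_le {s : Simplex m} (hs : s ∈ simplices m N) (k : ℕ) (i : Fin m) :
    vertex s k i ≤ N := by
  have := mem_simplices.1 hs i
  unfold vertex
  split <;> omega

lemma vertex_le_vertex_add_one (s : Simplex m) (j k : ℕ) (i : Fin m) :
    vertex s j i ≤ vertex s k i + 1 := by
  unfold vertex
  split <;> split <;> omega

lemma vertex_swap (s : Simplex m) {a b : Fin m} (hab : (a : ℕ) + 1 = b) {k : ℕ} (hk : k ≠ b) :
    vertex (s.1, Equiv.swap a b * s.2) k = vertex s k := by
  funext i
  have hval : ((Equiv.swap a b (s.2 i) : Fin m) : ℕ) < k ↔ (s.2 i : ℕ) < k := by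
    rcases eq_or_ne (s.2 i) a with h | h
    · rw [h, Equiv.swap_apply_left]; omega
    rcases eq_or_ne (s.2 i) b with h' | h'
    · rw [h', Equiv.swap_apply_right]; omega
    · rw [Equiv.swap_apply_of_ne_of_ne h h']
  simp only [vertex, Equiv.Perm.mul_apply, hval]

lemma vertex_apply_of_eq_zero (s : Simplex (m + 1)) {i : Fin (m + 1)} (hi : s.2 i = 0) {k : ℕ}
    (hk : 0 < k) : vertex s k i = s.1 i + 1 := by
  simp [vertex, hi, hk]

lemma vertex_apply_of_eq_last (s : Simplex (m + 1)) {i : Fin (m + 1)} (hi : s.2 i = Fin.last m)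
    {k : ℕ} (hk : k ≤ m) : vertex s k i = s.1 i := by
  simp [vertex, hi, hk]

/-- Drop the first vertex of the simplex and append a new last one. -/
def stepUp (s : Simplex (m + 1)) : Simplex (m + 1) :=
  (s.1 + Pi.single (s.2.symm 0) 1, (finRotate (m + 1))⁻¹ * s.2)

/-- Drop the last vertex of the simplex and prepend a new first one. -/
def stepDown (s : Simplex (m + 1)) : Simplex (m + 1) :=
  (s.1 - Pi.single (s.2.symm (Fin.last m)) 1, finRotate (m + 1) * s.2)

lemma vertex_stepUp (s : Simplex (m + 1)) {k : ℕ} (hk : k ≤ m) :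
    vertex (stepUp s) k = vertex s (k + 1) := by
  funext i
  by_cases hi : s.2 i = 0
  · have hrot : (finRotate (m + 1))⁻¹ 0 = Fin.last m := by
      rw [Equiv.Perm.inv_eq_iff_eq, finRotate_last]
    have hc : s.2.symm 0 = i := by rw [← hi, Equiv.symm_apply_apply]
    simp only [vertex, stepUp, Pi.add_apply, Equiv.Perm.mul_apply, hrot, hc, hi,
      Pi.single_eq_same, Fin.val_last, Fin.val_zero]
    split_ifs <;> omega
  · have hc : s.2.symm 0 ≠ i := by rintro rfl; exact hi (Equiv.apply_symm_apply _ _)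
    have := Fin.pos_iff_ne_zero.2 hi
    simp only [vertex, stepUp, Pi.add_apply, Equiv.Perm.mul_apply, coe_finRotate_inv_of_ne_zero _ hi,
      Pi.single_eq_of_ne' hc]
    split_ifs <;> omega

lemma stepUp_symm_last (s : Simplex (m + 1)) : (stepUp s).2.symm (Fin.last m) = s.2.symm 0 := by
  rw [Equiv.symm_apply_eq, stepUp, Equiv.Perm.mul_apply, Equiv.apply_symm_apply,
    eq_comm, Equiv.Perm.inv_eq_iff_eq, finRotate_last]

lemma stepDown_symm_zero (s : Simplex (m + 1)) : (stepDown s).2.symm 0 = s.2.symm (Fin.last m) := by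
  rw [Equiv.symm_apply_eq]
  simp only [stepDown, Equiv.Perm.mul_apply, Equiv.apply_symm_apply, finRotate_last]

lemma stepDown_stepUp (s : Simplex (m + 1)) : stepDown (stepUp s) = s := by
  rw [stepDown, stepUp_symm_last]
  exact Prod.ext (add_tsub_cancel_right _ _) (mul_inv_cancel_left _ _)

lemma stepUp_stepDown {s : Simplex (m + 1)} (hs : s.1 (s.2.symm (Fin.last m)) ≠ 0) :
    stepUp (stepDown s) = s := by
  rw [stepUp, stepDown_symm_zero]
  refine Prod.ext (tsub_add_cancel_of_le fun i => ?_) (inv_mul_cancel_left _ _)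
  rcases eq_or_ne i (s.2.symm (Fin.last m)) with rfl | hi
  · simpa using Nat.one_le_iff_ne_zero.2 hs
  · simp [Pi.single_eq_of_ne hi]

lemma vertex_stepDown {s : Simplex (m + 1)} (hs : s.1 (s.2.symm (Fin.last m)) ≠ 0) {k : ℕ}
    (hk : k ≤ m) : vertex (stepDown s) (k + 1) = vertex s k := by
  rw [← vertex_stepUp _ hk, stepUp_stepDown hs]

/-- Reflect the simplex `z.1` across its facet opposite to the vertex `z.2`, keeping track of
the same facet; facets on the boundary of the cube `[0, N]^(m+1)` are left fixed. -/
def pivot (N : ℕ) (z : Simplex (m + 1) × Fin (m + 2)) : Simplex (m + 1) × Fin (m + 2) :=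
  if h₀ : z.2 = 0 then
    if z.1.1 (z.1.2.symm 0) + 1 < N then (stepUp z.1, Fin.last _) else z
  else if hl : z.2 = Fin.last _ then
    if z.1.1 (z.1.2.symm (Fin.last m)) ≠ 0 then (stepDown z.1, 0) else z
  else ((z.1.1, Equiv.swap (z.2.pred h₀) (z.2.castPred hl) * z.1.2), z.2)

lemma pivot_zero (s : Simplex (m + 1)) :
    pivot N (s, 0) = if s.1 (s.2.symm 0) + 1 < N then (stepUp s, Fin.last _) else (s, 0) := by
  simp [pivot]

lemma pivot_last (s : Simplex (m + 1)) :
    pivot N (s, Fin.last _) =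
      if s.1 (s.2.symm (Fin.last m)) ≠ 0 then (stepDown s, 0) else (s, Fin.last _) := by
  simp [pivot, Fin.last_pos.ne']

lemma pivot_of_ne (s : Simplex (m + 1)) {j : Fin (m + 2)} (h₀ : j ≠ 0) (hl : j ≠ Fin.last _) :
    pivot N (s, j) = ((s.1, Equiv.swap (j.pred h₀) (j.castPred hl) * s.2), j) := by
  simp [pivot, h₀, hl]

lemma facet_pivot (z : Simplex (m + 1) × Fin (m + 2)) : facet (pivot N z) = facet z := by
  obtain ⟨s, j⟩ := z
  rcases eq_or_ne j 0 with rfl | h₀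
  · rw [pivot_zero]
    split_ifs
    · simp only [facet, Fin.succAbove_last, Fin.succAbove_zero, Fin.val_castSucc, Fin.val_succ,
        vertex_stepUp _ (Fin.is_le _)]
    · rfl
  rcases eq_or_ne j (Fin.last _) with rfl | hl
  · rw [pivot_last]
    split_ifs with hs
    · simp only [facet, Fin.succAbove_last, Fin.succAbove_zero, Fin.val_castSucc, Fin.val_succ,
        vertex_stepDown hs (Fin.is_le _)]
    · rfl
  rw [pivot_of_ne s h₀ hl]
  have hj := Fin.pos_iff_ne_zero.2 h₀
  refine image_congr fun k _ => vertex_swap s ?_ fun hk => Fin.succAbove_ne j k (Fin.ext ?_)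
  · simp only [Fin.val_pred, Fin.coe_castPred]; omega
  · simpa using hk

lemma pivot_fst_mem {z : Simplex (m + 1) × Fin (m + 2)} (hz : z.1 ∈ simplices (m + 1) N) :
    (pivot N z).1 ∈ simplices (m + 1) N := by
  obtain ⟨s, j⟩ := z
  rw [mem_simplices] at hz ⊢
  rcases eq_or_ne j 0 with rfl | h₀
  · rw [pivot_zero]
    split_ifs with hs
    · intro i
      rcases eq_or_ne i (s.2.symm 0) with rfl | hi
      · simpa [stepUp] using hs
      · simpa [stepUp, Pi.single_eq_of_ne hi] using hz i
    · exact hz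
  rcases eq_or_ne j (Fin.last _) with rfl | hl
  · rw [pivot_last]
    split_ifs
    · exact fun i => (tsub_le_self).trans_lt (hz i)
    · exact hz
  · rw [pivot_of_ne s h₀ hl]
    exact hz

lemma pivot_pivot {z : Simplex (m + 1) × Fin (m + 2)} (hz : z.1 ∈ simplices (m + 1) N) :
    pivot N (pivot N z) = z := by
  obtain ⟨s, j⟩ := z
  rcases eq_or_ne j 0 with rfl | h₀
  · rw [pivot_zero]
    split_ifs with hs
    · rw [pivot_last, if_pos (by rw [stepUp_symm_last]; simp [stepUp]), stepDown_stepUp]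
    · rw [pivot_zero, if_neg hs]
  rcases eq_or_ne j (Fin.last _) with rfl | hl
  · rw [pivot_last]
    split_ifs with hs
    · have : s.1 (s.2.symm (Fin.last m)) < N := mem_simplices.1 hz _
      rw [pivot_zero, if_pos (by rw [stepDown_symm_zero]; simp only [stepDown, Pi.sub_apply, Pi.single_eq_same]; omega),
        stepUp_stepDown hs]
    · rw [pivot_last, if_neg (by simpa using hs)]
  · rw [pivot_of_ne s h₀ hl, pivot_of_ne _ h₀ hl, Equiv.swap_mul_self_mul]

/-- The fixed points of `pivot` are the facets lying on a face `x_c = N` or `x_c = 0`. -/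
lemma pivot_eq_self {z : Simplex (m + 1) × Fin (m + 2)} (h : pivot N z = z) :
    (z.2 = 0 ∧ N ≤ z.1.1 (z.1.2.symm 0) + 1) ∨
      (z.2 = Fin.last _ ∧ z.1.1 (z.1.2.symm (Fin.last m)) = 0) := by
  obtain ⟨s, j⟩ := z
  rcases eq_or_ne j 0 with rfl | h₀
  · rw [pivot_zero] at h
    split_ifs at h with hs
    · exact absurd (congrArg Prod.snd h) Fin.last_pos.ne'
    · exact Or.inl ⟨rfl, not_lt.1 hs⟩
  rcases eq_or_ne j (Fin.last _) with rfl | hl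
  · rw [pivot_last] at h
    split_ifs at h with hs
    · exact absurd (congrArg Prod.snd h) Fin.last_pos.ne
    · exact Or.inr ⟨rfl, not_not.1 hs⟩
  · rw [pivot_of_ne s h₀ hl] at h
    have hswap := mul_eq_right.1 (congrArg (·.1.2) h)
    have := congrArg Fin.val (Equiv.swap_eq_one_iff.1 hswap)
    have hj := Fin.pos_iff_ne_zero.2 h₀
    simp only [Fin.val_pred, Fin.coe_castPred] at this
    omega

/-- A simplex of the face `x_last = N` is the facet opposite to vertex `0` of a simplex whose
first step raises the last coordinate. -/
def liftPerm (τ : Equiv.Perm (Fin m)) : Equiv.Perm (Fin (m + 1)) :=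
  Equiv.Perm.decomposeFin.symm (0, τ) * finRotate (m + 1)

lemma liftPerm_last (τ : Equiv.Perm (Fin m)) : liftPerm τ (Fin.last m) = 0 := by
  rw [liftPerm, Equiv.Perm.mul_apply, finRotate_last, Equiv.Perm.decomposeFin_symm_apply_zero]

lemma liftPerm_castSucc (τ : Equiv.Perm (Fin m)) (i : Fin m) :
    liftPerm τ i.castSucc = (τ i).succ := by
  rw [liftPerm, Equiv.Perm.mul_apply, finRotate_apply, Fin.coeSucc_eq_succ,
    Equiv.Perm.decomposeFin_symm_apply_succ, Equiv.swap_self, Equiv.refl_apply]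

lemma liftPerm_injective : Function.Injective (liftPerm (m := m)) := fun τ τ' h => by
  have := Equiv.Perm.decomposeFin.symm.injective (mul_right_cancel h)
  exact (Prod.ext_iff.1 this).2

lemma exists_liftPerm_eq {σ : Equiv.Perm (Fin (m + 1))} (hσ : σ (Fin.last m) = 0) :
    ∃ τ, liftPerm τ = σ := by
  obtain ⟨⟨a, τ⟩, hπ⟩ := Equiv.Perm.decomposeFin.symm.surjective (σ * (finRotate (m + 1))⁻¹)
  have ha : a = 0 := by
    rw [← Equiv.Perm.decomposeFin_symm_apply_zero a τ, hπ, Equiv.Perm.mul_apply,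
      Equiv.Perm.inv_eq_iff_eq.2 finRotate_last.symm, hσ]
  refine ⟨τ, ?_⟩
  rw [liftPerm, ← ha, hπ, inv_mul_cancel_right]

/-- A simplex of the face `x_last = N`, seen as a facet of a simplex of the cube. -/
def liftFace (N : ℕ) (w : Simplex m) : Simplex (m + 1) × Fin (m + 2) :=
  ((Fin.snoc w.1 (N - 1), liftPerm w.2), 0)

lemma vertex_liftFace (hN : 0 < N) (w : Simplex m) (k : ℕ) :
    vertex (liftFace N w).1 (k + 1) = Fin.snoc (vertex w k) N := by
  funext i
  refine Fin.lastCases ?_ (fun i => ?_) i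
  · simp only [vertex, liftFace, Fin.snoc_last, liftPerm_last, Fin.val_zero, Nat.zero_lt_succ,
      if_true]
    omega
  · simp [vertex, liftFace, Fin.snoc_castSucc, liftPerm_castSucc]

lemma facet_liftFace (hN : 0 < N) (w : Simplex m) :
    facet (liftFace N w) = Finset.univ.image fun k : Fin (m + 1) => Fin.snoc (vertex w k) N := by
  simp only [facet, liftFace, Fin.succAbove_zero, Fin.val_succ]
  exact image_congr fun k _ => vertex_liftFace hN w k

lemma isDoor_liftFace_iff (hN : 0 < N) (ℓ : (Fin (m + 1) → ℕ) → ℕ) (w : Simplex m) :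
    IsDoor ℓ (liftFace N w) ↔ IsFull (fun q => ℓ (Fin.snoc q N)) w := by
  rw [IsDoor, IsFull, facet_liftFace hN, Finset.image_image]
  rfl

lemma pivot_liftFace (hN : 0 < N) (w : Simplex m) : pivot N (liftFace N w) = liftFace N w := by
  have hc : (liftPerm w.2).symm 0 = Fin.last m := by
    rw [Equiv.symm_apply_eq, liftPerm_last]
  rw [liftFace, pivot_zero, if_neg (by simp only [hc, Fin.snoc_last, not_lt]; omega)]

lemma liftFace_fst_mem (hN : 0 < N) {w : Simplex m} (hw : w ∈ simplices m N) :
    (liftFace N w).1 ∈ simplices (m + 1) N := by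
  rw [mem_simplices] at hw ⊢
  intro i
  refine Fin.lastCases ?_ (fun i => ?_) i
  · simp only [liftFace, Fin.snoc_last]; omega
  · simpa [liftFace] using hw i

lemma liftFace_injective : Function.Injective (liftFace (m := m) N) := fun w w' h => by
  simp only [liftFace, Prod.mk.injEq, and_true] at h
  exact Prod.ext (Fin.snoc_injective2 h.1).1 (liftPerm_injective h.2)

structure Admissible (N : ℕ) (ℓ : (Fin m → ℕ) → ℕ) : Prop where
  le : ∀ p : Fin m → ℕ, (∀ i, p i ≤ N) → ℓ p ≤ m
  ne_of_eq_zero : ∀ p : Fin m → ℕ, (∀ i, p i ≤ N) → ∀ i, p i = 0 → ℓ p ≠ i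
  le_of_eq_top : ∀ p : Fin m → ℕ, (∀ i, p i ≤ N) → ∀ i, p i = N → ℓ p ≤ i

lemma Admissible.face {ℓ : (Fin (m + 1) → ℕ) → ℕ} (hℓ : Admissible N ℓ) :
    Admissible N fun q => ℓ (Fin.snoc q N) := by
  have hsnoc : ∀ q : Fin m → ℕ, (∀ i, q i ≤ N) → ∀ i, (Fin.snoc q N : Fin (m + 1) → ℕ) i ≤ N :=
    fun q hq i => Fin.lastCases (by simp) (fun i => by simpa using hq i) i
  refine ⟨fun q hq => ?_, fun q hq i hi => ?_, fun q hq i hi => ?_⟩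
  · simpa using hℓ.le_of_eq_top _ (hsnoc q hq) (Fin.last m) (by simp)
  · simpa using hℓ.ne_of_eq_zero _ (hsnoc q hq) i.castSucc (by simpa using hi)
  · simpa using hℓ.le_of_eq_top _ (hsnoc q hq) i.castSucc (by simpa using hi)

lemma card_filter_isDoor_mod_two {ℓ : (Fin m → ℕ) → ℕ} (s : Simplex m)
    (hℓ : ∀ k, ℓ (vertex s k) ≤ m) :
    #{j | IsDoor ℓ (s, j)} % 2 = if IsFull ℓ s then 1 else 0 := by
  have himage (j : Fin (m + 1)) : (facet (s, j)).image ℓ =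
      (Finset.univ.erase j).image fun k : Fin (m + 1) => ℓ (vertex s k) := by
    rw [facet, Finset.image_image, ← compl_singleton, ← Fin.image_succAbove_univ,
      Finset.image_image]
    rfl
  simp only [IsDoor, IsFull, himage, range_add_one]
  exact card_filter_subset_image_erase_mod_two notMem_range_self
    (fun k => by have := hℓ k; rw [Finset.mem_insert, Finset.mem_range]; omega) (by simp)

lemma card_filter_isDoor_modEq {ℓ : (Fin m → ℕ) → ℕ} (hℓ : Admissible N ℓ) :
    #{z ∈ simplices m N ×ˢ Finset.univ | IsDoor ℓ z} ≡ #{s ∈ simplices m N | IsFull ℓ s}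
      [MOD 2] := by
  rw [card_filter, sum_product, card_filter, Nat.ModEq, sum_nat_mod, sum_nat_mod (simplices m N)]
  refine congrArg (· % 2) (sum_congr rfl fun s hs => ?_)
  rw [← card_filter, card_filter_isDoor_mod_two s fun k => hℓ.le _ (vertex_le hs k)]
  split_ifs <;> rfl

/-- A door fixed by `pivot` cannot lie on a face `x_c = 0`, nor on a face `x_c = N` with
`c ≠ last`, by admissibility: it is a simplex of the face `x_last = N`. -/
lemma exists_liftFace_eq {ℓ : (Fin (m + 1) → ℕ) → ℕ} (hℓ : Admissible N ℓ)
    {z : Simplex (m + 1) × Fin (m + 2)} (hz : z.1 ∈ simplices (m + 1) N) (hdoor : IsDoor ℓ z)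
    (hfix : pivot N z = z) : ∃ w ∈ simplices m N, liftFace N w = z := by
  obtain ⟨⟨p, σ⟩, j⟩ := z
  have hp := mem_simplices.1 hz
  rcases pivot_eq_self hfix with ⟨rfl, hc⟩ | ⟨rfl, hc⟩
  · dsimp only at hc hp
    have hpc : p (σ.symm 0) + 1 = N := by have := hp (σ.symm 0); omega
    obtain ⟨v, hv, hℓv⟩ := mem_image.1 (hdoor (mem_range.2 m.lt_succ_self))
    obtain ⟨k, -, rfl⟩ := mem_image.1 hv
    have hvc : vertex (p, σ) ((0 : Fin (m + 2)).succAbove k) (σ.symm 0) = N := by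
      rw [vertex_apply_of_eq_zero (p, σ) (σ.apply_symm_apply 0)
        (Fin.pos_iff_ne_zero.2 (Fin.succAbove_ne 0 k))]
      exact hpc
    have hlast : σ.symm 0 = Fin.last m := by
      have := hℓ.le_of_eq_top _ (fun i => vertex_le hz _ i) _ hvc
      rw [hℓv] at this
      exact Fin.ext (le_antisymm (Fin.is_le _) this)
    obtain ⟨τ, hτ⟩ := exists_liftPerm_eq (σ := σ) (by rw [← hlast, Equiv.apply_symm_apply])
    refine ⟨(Fin.init p, τ), mem_simplices.2 fun i => hp _, ?_⟩
    have hpl : p (Fin.last m) = N - 1 := by rw [← hlast]; omega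
    rw [liftFace, hτ, ← hpl, Fin.snoc_init_self]
  · dsimp only at hc
    obtain ⟨v, hv, hℓv⟩ := mem_image.1 (hdoor (mem_range.2 (σ.symm (Fin.last m)).isLt))
    obtain ⟨k, -, rfl⟩ := mem_image.1 hv
    have hvc : vertex (p, σ) ((Fin.last _).succAbove k) (σ.symm (Fin.last m)) = 0 := by
      rw [vertex_apply_of_eq_last (p, σ) (σ.apply_symm_apply _)
        (Nat.lt_succ_iff.1 (Fin.lt_last_iff_ne_last.2 (Fin.succAbove_ne _ k)))]
      exact hc
    exact (hℓ.ne_of_eq_zero _ (fun i => vertex_le hz _ i) _ hvc hℓv).elim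

lemma card_filter_pivot_eq_self {ℓ : (Fin (m + 1) → ℕ) → ℕ} (hN : 0 < N) (hℓ : Admissible N ℓ) :
    #{z ∈ simplices (m + 1) N ×ˢ Finset.univ | IsDoor ℓ z ∧ pivot N z = z} =
      #{w ∈ simplices m N | IsFull (fun q => ℓ (Fin.snoc q N)) w} := by
  refine (card_bij (fun w _ => liftFace N w) (fun w hw => ?_)
    (fun w _ w' _ h => liftFace_injective h) (fun z hz => ?_)).symm
  · obtain ⟨hw, hfull⟩ := mem_filter.1 hw
    exact mem_filter.2 ⟨mem_product.2 ⟨liftFace_fst_mem hN hw, Finset.mem_univ _⟩,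
      (isDoor_liftFace_iff hN ℓ w).2 hfull, pivot_liftFace hN w⟩
  · obtain ⟨hz, hdoor, hfix⟩ := mem_filter.1 hz
    obtain ⟨w, hw, rfl⟩ := exists_liftFace_eq hℓ (mem_product.1 hz).1 hdoor hfix
    exact ⟨w, mem_filter.2 ⟨hw, (isDoor_liftFace_iff hN ℓ w).1 hdoor⟩, rfl⟩

theorem odd_card_filter_isFull (hN : 0 < N) {ℓ : (Fin m → ℕ) → ℕ} (hℓ : Admissible N ℓ) :
    Odd #{s ∈ simplices m N | IsFull ℓ s} := by
  induction m with
  | zero =>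
    have hfull (s : Simplex 0) : IsFull ℓ s := by
      intro t ht
      rw [range_one, Finset.mem_singleton] at ht
      exact mem_image.2 ⟨0, Finset.mem_univ _, by
        rw [Fin.val_zero, ht]; exact Nat.le_zero.1 (hℓ.le _ fun i => i.elim0)⟩
    rw [filter_true_of_mem fun s _ => hfull s]
    exact ⟨0, by simp [simplices]⟩
  | succ m ih =>
    have hdoors := card_filter_isDoor_modEq hℓ
    have hpivot := card_filter_eq_self_modEq_card
      (s := {z ∈ simplices (m + 1) N ×ˢ Finset.univ | IsDoor ℓ z}) (g := pivot N)
      (fun z hz => ?_) (fun z hz => pivot_pivot (mem_product.1 (mem_filter.1 hz).1).1)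
    · rw [filter_filter, card_filter_pivot_eq_self hN hℓ] at hpivot
      exact Nat.odd_iff.2 (Eq.trans (hdoors.symm.trans hpivot.symm) (Nat.odd_iff.1 (ih hℓ.face)))
    · obtain ⟨hz, hdoor⟩ := mem_filter.1 hz
      refine mem_filter.2
        ⟨mem_product.2 ⟨pivot_fst_mem (mem_product.1 hz).1, Finset.mem_univ _⟩, ?_⟩
      rwa [IsDoor, facet_pivot]

theorem exists_isFull (hN : 0 < N) {ℓ : (Fin m → ℕ) → ℕ} (hℓ : Admissible N ℓ) :
    ∃ s ∈ simplices m N, IsFull ℓ s := by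
  obtain ⟨s, hs⟩ := Finset.card_pos.1 (odd_card_filter_isFull hN hℓ).pos
  exact ⟨s, (Finset.mem_filter.1 hs).1, (Finset.mem_filter.1 hs).2⟩

end Kuhn

theorem IsCompact.exists_eq_zero_of_forall_exists_norm_le {X E : Type*} [TopologicalSpace X]
    [NormedAddCommGroup E] {K : Set X} (hK : IsCompact K) {f : X → E} (hf : ContinuousOn f K)
    (h : ∀ ε > 0, ∃ x ∈ K, ‖f x‖ ≤ ε) : ∃ x ∈ K, f x = 0 := by
  obtain ⟨x₀, hx₀, -⟩ := h 1 one_pos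
  obtain ⟨x, hx, hmin⟩ := hK.exists_isMinOn ⟨x₀, hx₀⟩ hf.norm
  refine ⟨x, hx, norm_le_zero_iff.1 (le_of_forall_pos_le_add fun ε hε => ?_)⟩
  obtain ⟨y, hy, hfy⟩ := h ε hε
  simpa using (hmin hy).trans hfy

namespace PoincareMiranda

open Kuhn

variable {n N : ℕ} {F : (Fin n → ℝ) → Fin n → ℝ}

noncomputable def gridPoint (N : ℕ) (p : Fin n → ℕ) : Fin n → ℝ := fun i => p i / N

lemma gridPoint_mem_Icc {p : Fin n → ℕ} (hp : ∀ i, p i ≤ N) : gridPoint N p ∈ Icc 0 1 :=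
  ⟨fun i => show (0 : ℝ) ≤ p i / N by positivity,
    fun i => show (p i : ℝ) / N ≤ 1 from div_le_one_of_le₀ (by exact_mod_cast hp i) N.cast_nonneg⟩

lemma dist_gridPoint_le {p q : Fin n → ℕ} (hpq : ∀ i, p i ≤ q i + 1) (hqp : ∀ i, q i ≤ p i + 1) :
    dist (gridPoint N p) (gridPoint N q) ≤ 1 / N := by
  refine (dist_pi_le_iff (by positivity)).2 fun i => ?_
  rw [gridPoint, gridPoint, Real.dist_eq, ← sub_div, abs_div, Nat.abs_cast]
  gcongr
  have h₁ : (p i : ℝ) ≤ q i + 1 := by exact_mod_cast hpq i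
  have h₂ : (q i : ℝ) ≤ p i + 1 := by exact_mod_cast hqp i
  rw [abs_sub_le_iff]
  constructor <;> linarith

/-- The least `i` such that `F_i ≤ 0` at `p / N` and `p_i ≠ 0`; every `i ≥ n` belongs to the set,
so the label is `n` when there is no such `i < n`. -/
noncomputable def label (F : (Fin n → ℝ) → Fin n → ℝ) (N : ℕ) (p : Fin n → ℕ) : ℕ :=
  sInf {i | ∀ h : i < n, F (gridPoint N p) ⟨i, h⟩ ≤ 0 ∧ p ⟨i, h⟩ ≠ 0}

lemma label_nonempty (p : Fin n → ℕ) :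
    {i | ∀ h : i < n, F (gridPoint N p) ⟨i, h⟩ ≤ 0 ∧ p ⟨i, h⟩ ≠ 0}.Nonempty :=
  ⟨n, fun h => absurd h n.lt_irrefl⟩

lemma apply_nonpos_of_label_eq {p : Fin n → ℕ} {i : Fin n} (h : label F N p = i) :
    F (gridPoint N p) i ≤ 0 ∧ p i ≠ 0 := by
  have := Nat.sInf_mem (label_nonempty (F := F) (N := N) p)
  rw [← label, h] at this
  exact this i.isLt

lemma eq_zero_of_label_eq {p : Fin n → ℕ} (h : label F N p = n) (i : Fin n)
    (hi : F (gridPoint N p) i ≤ 0) : p i = 0 := by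
  by_contra hpi
  have hlt : (i : ℕ) < label F N p := by rw [h]; exact i.isLt
  exact Nat.notMem_of_lt_sInf hlt (Set.mem_ofPred.2 fun _ => ⟨hi, hpi⟩)

lemma admissible_label (hN : 0 < N)
    (h1 : ∀ x ∈ Icc (0 : Fin n → ℝ) 1, ∀ k, x k = 1 → F x k ≤ 0) : Admissible N (label F N) := by
  refine ⟨fun p _ => Nat.sInf_le fun h => absurd h n.lt_irrefl, fun p _ i hi h => ?_,
    fun p hp i hi => Nat.sInf_le fun _ =>
      ⟨h1 _ (gridPoint_mem_Icc hp) i ?_, by simp only [Fin.eta]; omega⟩⟩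
  · exact (apply_nonpos_of_label_eq h).2 hi
  · simp [gridPoint, hi, hN.ne']

theorem exists_mem_Icc_norm_le (hF : ContinuousOn F (Icc 0 1))
    (h0 : ∀ x ∈ Icc (0 : Fin n → ℝ) 1, ∀ k, x k = 0 → 0 ≤ F x k)
    (h1 : ∀ x ∈ Icc (0 : Fin n → ℝ) 1, ∀ k, x k = 1 → F x k ≤ 0) {ε : ℝ} (hε : 0 < ε) :
    ∃ x ∈ Icc 0 1, ‖F x‖ ≤ ε := by
  obtain ⟨δ, hδ, hFδ⟩ :=
    Metric.uniformContinuousOn_iff.1 (isCompact_Icc.uniformContinuousOn_of_continuous hF) ε hε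
  obtain ⟨N, hN⟩ := exists_nat_one_div_lt hδ
  obtain ⟨s, hs, hfull⟩ := exists_isFull N.succ_pos (admissible_label N.succ_pos h1)
  obtain ⟨k₀, -, hk₀⟩ := Finset.mem_image.1 (hfull (Finset.mem_range.2 n.lt_succ_self))
  set x := gridPoint (N + 1) (vertex s k₀)
  have hx : x ∈ Icc 0 1 := gridPoint_mem_Icc (vertex_le hs k₀)
  refine ⟨x, hx, (pi_norm_le_iff_of_nonneg hε.le).2 fun i => ?_⟩
  obtain ⟨k, -, hk⟩ :=
    Finset.mem_image.1 (hfull (Finset.mem_range.2 (i.isLt.trans n.lt_succ_self)))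
  set y := gridPoint (N + 1) (vertex s k)
  have hy : y ∈ Icc 0 1 := gridPoint_mem_Icc (vertex_le hs k)
  have hx_nonneg : 0 ≤ F x i := by
    by_contra! hneg
    refine hneg.not_ge (h0 x hx i ?_)
    simp [x, gridPoint, eq_zero_of_label_eq hk₀ i hneg.le]
  have hy_nonpos : F y i ≤ 0 := (apply_nonpos_of_label_eq hk).1
  have hxy : dist x y < δ := (dist_gridPoint_le (vertex_le_vertex_add_one s k₀ k)
    (vertex_le_vertex_add_one s k k₀)).trans_lt (by simpa using hN)
  have hclose := (dist_le_pi_dist _ _ i).trans_lt (hFδ x hx y hy hxy)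
  rw [Real.dist_eq, abs_sub_lt_iff] at hclose
  rw [Real.norm_eq_abs, abs_of_nonneg hx_nonneg]
  linarith [hclose.1]

end PoincareMiranda

theorem poincare_miranda_general
    (n : ℕ)
    (F : (Fin n → ℝ) → Fin n → ℝ)
    (hF : ContinuousOn F (Set.Icc (0 : Fin n → ℝ) 1))
    (h0 : ∀ x ∈ Set.Icc (0 : Fin n → ℝ) 1, ∀ k, x k = 0 → 0 ≤ F x k)
    (h1 : ∀ x ∈ Set.Icc (0 : Fin n → ℝ) 1, ∀ k, x k = 1 → F x k ≤ 0) :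
    ∃ x ∈ Set.Icc (0 : Fin n → ℝ) 1, F x = 0 :=
  isCompact_Icc.exists_eq_zero_of_forall_exists_norm_le hF fun _ hε =>
    PoincareMiranda.exists_mem_Icc_norm_le hF h0 h1 hε

/-- **Bolzano–Poincaré–Miranda theorem.** Let `F = (f_1, …, f_n)` be a
continuous map on the unit cube `[0,1]^n` such that for each `k`, `f_k ≥ 0` on the face
`{x_k = 0}` and `f_k ≤ 0` on the face `{x_k = 1}`. Then `F` has a zero in the cube. -/
theorem poincare_miranda
    (n : ℕ) (hn : 1 ≤ n)
    (F : (Fin n → ℝ) → Fin n → ℝ)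
    (hF : ContinuousOn F (Set.Icc (0 : Fin n → ℝ) 1))
    (h0 : ∀ x ∈ Set.Icc (0 : Fin n → ℝ) 1, ∀ k, x k = 0 → 0 ≤ F x k)
    (h1 : ∀ x ∈ Set.Icc (0 : Fin n → ℝ) 1, ∀ k, x k = 1 → F x k ≤ 0) :
    ∃ x ∈ Set.Icc (0 : Fin n → ℝ) 1, F x = 0 :=
  poincare_miranda_general n F hF h0 h1
end
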